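/- arXiv:2510.16661 — 8 statements merged into one kernel-verified Lean document; each statement's English description precedes it below -/
import Mathlib

section
/- (Theorem 1: consistency of weighting estimators that track a representer.) Under the sampling model, let f ∈ L²(P_Z) and let γ* ∈ L²(P_Z) satisfy ψ = ∫ γ*(z) f(z) dP_Z(z). Suppose that for each n there are real random variables γ̂_{n,1}, …, γ̂_{n,n} on (Ω, P) such that (1/n)·Σ_{i=1}^n (γ̂_{n,i} − γ*(Z_i))² converges to 0 in probability as n → ∞. Then the linear estimator ψ̂_n := (1/n)·Σ_{i=1}^n γ̂_{n,i} Y_i converges to ψ in probability. -/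
open MeasureTheory ProbabilityTheory Filter

/-! Split the estimator as `(1/n) Σ γ*(Zᵢ) Yᵢ + (1/n) Σ (γ̂ₙᵢ - γ*(Zᵢ)) Yᵢ`. By the strong law the
first average tends to `E[γ*(Z) Y] = E[γ*(Z) E[Y | Z]] = ∫ γ* f = ψ`. By Cauchy–Schwarz the square
of the second is at most `(1/n) Σ (γ̂ₙᵢ - γ*(Zᵢ))² · (1/n) Σ Yᵢ²`, a product of a factor tending to
`0` in probability and one tending to `E[Y²]` by the strong law. -/

namespace MeasureTheory

variable {α ι E : Type*} [MeasurableSpace α] {μ : Measure α} {l : Filter ι}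

-- No measurability is assumed (the weights `γ̂` are arbitrary), so these lemmas go through union
-- bounds rather than the subsequence criterion.
theorem TendstoInMeasure.add [SeminormedAddCommGroup E] {f f' : ι → α → E} {g g' : α → E}
    (hf : TendstoInMeasure μ f l g) (hf' : TendstoInMeasure μ f' l g') :
    TendstoInMeasure μ (fun i x => f i x + f' i x) l (fun x => g x + g' x) := by
  rw [tendstoInMeasure_iff_norm] at *
  intro ε hε
  have hsum := (hf (ε / 2) (half_pos hε)).add (hf' (ε / 2) (half_pos hε))
  rw [add_zero] at hsum
  refine tendsto_of_tendsto_of_tendsto_of_le_of_le tendsto_const_nhds hsum (fun _ => zero_le)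
    fun i => (measure_mono fun x hx => ?_).trans (measure_union_le _ _)
  by_contra! hlt
  simp only [Set.mem_union, Set.mem_ofPred_eq, not_or, not_le] at hx hlt
  have := norm_add_le (f i x - g x) (f' i x - g' x)
  rw [add_sub_add_comm] at hx
  linarith [hlt.1, hlt.2]

theorem TendstoInMeasure.zero_mul_tendsto_const {f g : ι → α → ℝ} {c : ℝ}
    (hf : TendstoInMeasure μ f l fun _ => 0) (hg : TendstoInMeasure μ g l fun _ => c) :
    TendstoInMeasure μ (fun i x => f i x * g i x) l fun _ => 0 := by
  rw [tendstoInMeasure_iff_norm] at *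
  intro ε hε
  have hδ : 0 < ε / (|c| + 1) := by positivity
  have hsum := (hf _ hδ).add (hg 1 one_pos)
  rw [add_zero] at hsum
  refine tendsto_of_tendsto_of_tendsto_of_le_of_le tendsto_const_nhds hsum (fun _ => zero_le)
    fun i => (measure_mono fun x hx => ?_).trans (measure_union_le _ _)
  by_contra! hlt
  simp only [Set.mem_union, Set.mem_ofPred_eq, not_or, not_le, sub_zero, Real.norm_eq_abs]
    at hx hlt
  have hg_lt : |g i x| < |c| + 1 := by
    have := abs_sub_abs_le_abs_sub (g i x) c
    linarith [hlt.2]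
  have : |f i x| * |g i x| < ε / (|c| + 1) * (|c| + 1) :=
    mul_lt_mul'' hlt.1 hg_lt (abs_nonneg _) (abs_nonneg _)
  rw [div_mul_cancel₀ _ (by positivity), ← abs_mul] at this
  linarith

theorem tendstoInMeasure_zero_of_sq_le {f g : ι → α → ℝ} (hfg : ∀ i x, f i x ^ 2 ≤ g i x)
    (hg : TendstoInMeasure μ g l fun _ => 0) : TendstoInMeasure μ f l fun _ => 0 := by
  rw [tendstoInMeasure_iff_norm] at *
  intro ε hε
  refine tendsto_of_tendsto_of_tendsto_of_le_of_le tendsto_const_nhds (hg (ε ^ 2) (by positivity))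
    (fun _ => zero_le) fun i => measure_mono fun x hx => ?_
  simp only [Set.mem_ofPred_eq, sub_zero, Real.norm_eq_abs] at hx ⊢
  calc ε ^ 2 ≤ |f i x| ^ 2 := pow_le_pow_left₀ hε.le hx 2
    _ = f i x ^ 2 := sq_abs _
    _ ≤ |g i x| := (hfg i x).trans (le_abs_self _)

end MeasureTheory

theorem Finset.sq_mul_sum_mul_le {ι : Type*} (s : Finset ι) (c : ℝ) (a b : ι → ℝ) :
    (c * ∑ i ∈ s, a i * b i) ^ 2 ≤ (c * ∑ i ∈ s, a i ^ 2) * (c * ∑ i ∈ s, b i ^ 2) := by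
  calc (c * ∑ i ∈ s, a i * b i) ^ 2 = c ^ 2 * (∑ i ∈ s, a i * b i) ^ 2 := mul_pow _ _ _
    _ ≤ c ^ 2 * ((∑ i ∈ s, a i ^ 2) * ∑ i ∈ s, b i ^ 2) :=
      mul_le_mul_of_nonneg_left (s.sum_mul_sq_le_sq_mul_sq a b) (sq_nonneg c)
    _ = (c * ∑ i ∈ s, a i ^ 2) * (c * ∑ i ∈ s, b i ^ 2) := by ring

namespace ProbabilityTheory

variable {Ω β : Type*} [MeasurableSpace Ω] {P : Measure Ω} [IsProbabilityMeasure P]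

theorem tendstoInMeasure_strong_law {X : ℕ → Ω → ℝ} (hint : Integrable (X 0) P)
    (hindep : Pairwise (Function.onFun (IndepFun · · P) X))
    (hident : ∀ i, IdentDistrib (X i) (X 0) P P) :
    TendstoInMeasure P (fun (n : ℕ) ω => (1 / (n : ℝ)) * ∑ i ∈ Finset.range n, X i ω) atTop
      fun _ => ∫ ω, X 0 ω ∂P := by
  refine tendstoInMeasure_of_tendsto_ae (fun n => ?_) ?_
  · exact (Finset.aemeasurable_fun_sum _ fun i _ => (hident i).aemeasurable_fst).const_mul _
      |>.aestronglyMeasurable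
  · filter_upwards [strong_law_ae X hint hindep hident] with ω hω
    simpa only [one_div, smul_eq_mul] using hω

theorem tendstoInMeasure_strong_law_comp [MeasurableSpace β] {V : ℕ → Ω → β}
    (hindep : iIndepFun V P) (hident : ∀ i, IdentDistrib (V i) (V 0) P P) {g : β → ℝ}
    (hg : Measurable g) (hint : Integrable (fun ω => g (V 0 ω)) P) :
    TendstoInMeasure P (fun (n : ℕ) ω => (1 / (n : ℝ)) * ∑ i ∈ Finset.range n, g (V i ω)) atTop
      fun _ => ∫ ω, g (V 0 ω) ∂P :=
  tendstoInMeasure_strong_law (X := fun i ω => g (V i ω)) hint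
    (fun _ _ hij => (hindep.comp (fun _ => g) fun _ => hg).indepFun hij)
    fun i => (hident i).comp hg

end ProbabilityTheory

section Regression

variable {Ω 𝒵 : Type*} {mΩ : MeasurableSpace Ω} [MeasurableSpace 𝒵] {P : Measure Ω}
  [IsFiniteMeasure P]

theorem integral_mul_condExp_of_stronglyMeasurable {m : MeasurableSpace Ω} (hm : m ≤ mΩ)
    {g Y : Ω → ℝ} (hg : StronglyMeasurable[m] g) (hgY : Integrable (g * Y) P)
    (hY : Integrable Y P) : ∫ ω, g ω * (P[Y | m]) ω ∂P = ∫ ω, g ω * Y ω ∂P :=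
  (integral_congr_ae (condExp_mul_of_stronglyMeasurable_left hg hgY hY).symm).trans
    (integral_condExp hm)

theorem integral_comp_mul_eq_integral_map_of_condExp_eq {Z : Ω → 𝒵} (hZ : Measurable Z)
    {Y : Ω → ℝ} (hY : Integrable Y P) {f γ : 𝒵 → ℝ}
    (hf : AEStronglyMeasurable f (P.map Z))
    (hfreg : (fun ω => f (Z ω)) =ᵐ[P] P[Y | MeasurableSpace.comap Z inferInstance])
    (hγ : Measurable γ) (hγY : Integrable (fun ω => γ (Z ω) * Y ω) P) :
    ∫ ω, γ (Z ω) * Y ω ∂P = ∫ z, γ z * f z ∂(P.map Z) := by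
  have hγZ : StronglyMeasurable[MeasurableSpace.comap Z inferInstance] fun ω => γ (Z ω) :=
    (hγ.comp (comap_measurable Z)).stronglyMeasurable
  rw [integral_map (f := fun z => γ z * f z) hZ.aemeasurable (hγ.aestronglyMeasurable.mul hf),
    ← integral_mul_condExp_of_stronglyMeasurable hZ.comap_le hγZ hγY hY]
  refine integral_congr_ae ?_
  filter_upwards [hfreg] with ω hω
  rw [hω]

end Regression

theorem minimax_linear_consistency_general
    {Ω 𝒵 : Type*} [MeasurableSpace Ω] [MeasurableSpace 𝒵]
    (P : Measure Ω) [IsProbabilityMeasure P]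
    (Z : ℕ → Ω → 𝒵) (Y : ℕ → Ω → ℝ)
    (hZmeas : ∀ i, Measurable (Z i))
    (hindep : iIndepFun (fun i ω => (Z i ω, Y i ω)) P)
    (hident : ∀ i, IdentDistrib (fun ω => (Z i ω, Y i ω)) (fun ω => (Z 0 ω, Y 0 ω)) P P)
    (hY2 : MemLp (Y 0) 2 P)
    (f : 𝒵 → ℝ)
    (hfreg : (fun ω => f (Z 0 ω)) =ᵐ[P] P[Y 0 | MeasurableSpace.comap (Z 0) inferInstance])
    (hfL2 : MemLp f 2 (P.map (Z 0)))
    (γstar : 𝒵 → ℝ) (hγL2 : MemLp γstar 2 (P.map (Z 0)))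
    (ψ : ℝ) (hψ : ψ = ∫ z, γstar z * f z ∂(P.map (Z 0)))
    (γhat : ℕ → ℕ → Ω → ℝ)
    (hγhat : TendstoInMeasure P
      (fun (n : ℕ) ω => (1 / (n : ℝ)) * ∑ i ∈ Finset.range n, (γhat n i ω - γstar (Z i ω)) ^ 2)
      atTop (fun _ => 0)) :
    TendstoInMeasure P
      (fun (n : ℕ) ω => (1 / (n : ℝ)) * ∑ i ∈ Finset.range n, γhat n i ω * Y i ω)
      atTop (fun _ => ψ) := by
  obtain ⟨γ, hγ, hγstar⟩ : ∃ γ : 𝒵 → ℝ, Measurable γ ∧ γstar =ᵐ[P.map (Z 0)] γ :=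
    ⟨_, hγL2.aestronglyMeasurable.aemeasurable.measurable_mk,
      hγL2.aestronglyMeasurable.aemeasurable.ae_eq_mk⟩
  have hγZ : ∀ᵐ ω ∂P, ∀ i, γstar (Z i ω) = γ (Z i ω) := by
    refine ae_all_iff.mpr fun i => ae_eq_comp (hZmeas i).aemeasurable ?_
    have hlaw : P.map (Z i) = P.map (Z 0) := ((hident i).comp measurable_fst).map_eq
    rwa [hlaw]
  have hγY : Integrable (fun ω => γ (Z 0 ω) * Y 0 ω) P :=
    ((memLp_map_measure_iff hγ.aestronglyMeasurable (hZmeas 0).aemeasurable).mp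
      (hγL2.ae_eq hγstar)).integrable_mul hY2
  have hmean : ∫ ω, γ (Z 0 ω) * Y 0 ω ∂P = ψ := by
    rw [hψ, integral_comp_mul_eq_integral_map_of_condExp_eq (hZmeas 0) (hY2.integrable one_le_two)
      hfL2.aestronglyMeasurable hfreg hγ hγY]
    exact integral_congr_ae (hγstar.mono fun z hz => by simp only [hz])
  have hsignal : TendstoInMeasure P
      (fun (n : ℕ) ω => (1 / (n : ℝ)) * ∑ i ∈ Finset.range n, γ (Z i ω) * Y i ω)
      atTop fun _ => ψ :=
    hmean ▸ tendstoInMeasure_strong_law_comp (g := fun p => γ p.1 * p.2) hindep hident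
      ((hγ.comp measurable_fst).mul measurable_snd) hγY
  have hY2mean := tendstoInMeasure_strong_law_comp hindep hident
    (g := fun p => p.2 ^ 2) (measurable_snd.pow_const 2) hY2.integrable_sq
  have herror : TendstoInMeasure P (fun (n : ℕ) ω =>
      (1 / (n : ℝ)) * ∑ i ∈ Finset.range n, (γhat n i ω - γ (Z i ω)) * Y i ω) atTop
      fun _ => 0 := by
    refine tendstoInMeasure_zero_of_sq_le (fun n ω => Finset.sq_mul_sum_mul_le _ _ _ _)
      (TendstoInMeasure.zero_mul_tendsto_const ?_ hY2mean)
    exact hγhat.congr_left fun n => hγZ.mono fun ω hω => by simp only [hω]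
  convert hsignal.add herror using 3 with n ω
  · rw [← mul_add, ← Finset.sum_add_distrib]
    congr 1
    exact Finset.sum_congr rfl fun i _ => by ring
  · rw [add_zero]

/-- Theorem 1: consistency of weighting estimators that track a representer.
Under the i.i.d. sampling model `Y_i = f(Z_i) + ε_i` with `E[ε|Z] = 0`,
`Var[Y|Z=z] = σ²(z) ≤ σ̄²`, if `f, γ* ∈ L²(P_Z)`, `ψ = ∫ γ* f dP_Z`, and the weights
`γ̂_{n,i}` satisfy `(1/n)·Σ (γ̂_{n,i} − γ*(Z_i))² →ₚ 0`, then
`(1/n)·Σ γ̂_{n,i} Y_i →ₚ ψ`. -/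
theorem minimax_linear_consistency
    {Ω 𝒵 : Type*} [MeasurableSpace Ω] [MeasurableSpace 𝒵]
    (P : Measure Ω) [IsProbabilityMeasure P]
    (Z : ℕ → Ω → 𝒵) (Y : ℕ → Ω → ℝ)
    (hZmeas : ∀ i, Measurable (Z i)) (hYmeas : ∀ i, Measurable (Y i))
    (hindep : iIndepFun (fun i ω => (Z i ω, Y i ω)) P)
    (hident : ∀ i, IdentDistrib (fun ω => (Z i ω, Y i ω)) (fun ω => (Z 0 ω, Y 0 ω)) P P)
    (hY2 : MemLp (Y 0) 2 P)
    (f : 𝒵 → ℝ)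
    (hfreg : (fun ω => f (Z 0 ω)) =ᵐ[P] P[Y 0 | MeasurableSpace.comap (Z 0) inferInstance])
    (σ2 : 𝒵 → ℝ) (σbar2 : ℝ)
    (hσ2 : (fun ω => σ2 (Z 0 ω)) =ᵐ[P]
      P[fun ω => (Y 0 ω - f (Z 0 ω)) ^ 2 | MeasurableSpace.comap (Z 0) inferInstance])
    (hσbd : ∀ᵐ z ∂(P.map (Z 0)), σ2 z ≤ σbar2)
    (hfL2 : MemLp f 2 (P.map (Z 0)))
    (γstar : 𝒵 → ℝ) (hγL2 : MemLp γstar 2 (P.map (Z 0)))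
    (ψ : ℝ) (hψ : ψ = ∫ z, γstar z * f z ∂(P.map (Z 0)))
    (γhat : ℕ → ℕ → Ω → ℝ)
    (hγhat : TendstoInMeasure P
      (fun (n : ℕ) ω => (1 / (n : ℝ)) * ∑ i ∈ Finset.range n, (γhat n i ω - γstar (Z i ω)) ^ 2)
      atTop (fun _ => 0)) :
    TendstoInMeasure P
      (fun (n : ℕ) ω => (1 / (n : ℝ)) * ∑ i ∈ Finset.range n, γhat n i ω * Y i ω)
      atTop (fun _ => ψ) :=
  minimax_linear_consistency_general P Z Y hZmeas hindep hident hY2 f hfreg hfL2 γstar hγL2 ψ hψ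
    γhat hγhat
end

section
/- (Key deterministic bound; step in the proof of Theorem 2.) In the empirical/population notation, let γ* ∈ L²(P_Z) and let h assign to suitable functions g: 𝒵 → ℝ a function h(·, g): 𝒵 → ℝ such that γ*·g − h(·, g) is P_Z-integrable; define M(g) := E_n[γ*·g − h(·, g)] − E[γ*·g − h(·, g)]. Fix constants η_Q ∈ (0, 1], η_M > 0, r > 0, B > 0 and assume that every f ∈ F satisfies: (i) if E f² ≥ r² then E_n f² ≥ η_Q·E f²; (ii) if E f² ≥ r² then |M(f)| ≤ η_M·E f²; (iii) if E f² ≤ r² then |M(f)| ≤ η_M·r². Let g ∈ L²(P_Z) satisfy g/2 ∈ F, h(z, g) = 2·h(z, g/2) for all z ∈ 𝒵, E_n g² ≤ B, E_n h(·, g) ≥ 0, and E_n h(·, g) + M(g) ≤ 0. Then E_n h(·, g) ≤ max(η_M·B/(2·η_Q), 2·η_M·r²). -/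
open MeasureTheory

/-- The empirical mean `E_n u = (1/n)·Σ_{i=1}^n u(z_i)` over fixed design points. -/
noncomputable def empMean {𝒵 : Type*} {n : ℕ} (z : Fin n → 𝒵) (u : 𝒵 → ℝ) : ℝ :=
  (1 / (n : ℝ)) * ∑ i, u (z i)

/-
Since `h(·, g) = 2·h(·, g/2)`, the map `M` is 2-homogeneous along `g`, so `M g = 2·M(g/2)`,
and `E_n h(·, g) ≤ -M g ≤ 2·|M(g/2)|`. For `f = g/2` either `E f² ≤ r²`, and (iii) bounds
`|M f|` by `η_M·r²`, or `E f² ≥ r²`, and (i) gives `E f² ≤ E_n f² / η_Q ≤ B/(4·η_Q)`, which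
(ii) turns into `|M f| ≤ η_M·B/(4·η_Q)`.
-/

theorem empMean_const_mul {𝒵 : Type*} {n : ℕ} (z : Fin n → 𝒵) (c : ℝ) (u : 𝒵 → ℝ) :
    empMean z (fun ζ => c * u ζ) = c * empMean z u := by
  simp only [empMean, ← Finset.mul_sum]
  ring

theorem empMean_sub_integral_const_mul {𝒵 : Type*} [MeasurableSpace 𝒵] (μ : Measure 𝒵)
    {n : ℕ} (z : Fin n → 𝒵) (c : ℝ) (u : 𝒵 → ℝ) :
    empMean z (fun ζ => c * u ζ) - ∫ ζ, c * u ζ ∂μ = c * (empMean z u - ∫ ζ, u ζ ∂μ) := by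
  rw [empMean_const_mul, integral_const_mul]
  ring

/-- The real-number core of the argument: `q` plays `E f²`, `e` plays `E_n f²`, `m` plays
`M f`. -/
theorem abs_le_max_of_quadratic_bounds {m q e b ηQ ηM r : ℝ} (hηQ : 0 < ηQ) (hηM : 0 < ηM)
    (hi : r ^ 2 ≤ q → ηQ * q ≤ e) (hii : r ^ 2 ≤ q → |m| ≤ ηM * q)
    (hiii : q ≤ r ^ 2 → |m| ≤ ηM * r ^ 2) (he : e ≤ b) :
    |m| ≤ max (ηM * b / ηQ) (ηM * r ^ 2) := by
  rcases le_total q (r ^ 2) with hsmall | hlarge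
  · exact (hiii hsmall).trans (le_max_right _ _)
  · have hq : q ≤ b / ηQ := by
      rw [le_div_iff₀ hηQ, mul_comm]
      exact (hi hlarge).trans he
    calc |m| ≤ ηM * q := hii hlarge
      _ ≤ ηM * (b / ηQ) := by gcongr
      _ = ηM * b / ηQ := (mul_div_assoc _ _ _).symm
      _ ≤ _ := le_max_left _ _

theorem deterministic_bound_for_h_general
    {𝒵 : Type*} [MeasurableSpace 𝒵] (PZ : Measure 𝒵)
    {n : ℕ} (z : Fin n → 𝒵)
    (F : Set (𝒵 → ℝ))
    (γstar : 𝒵 → ℝ)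
    (h : (𝒵 → ℝ) → 𝒵 → ℝ)
    (M : (𝒵 → ℝ) → ℝ)
    (hM : ∀ u, M u = empMean z (fun ζ => γstar ζ * u ζ - h u ζ) -
        ∫ ζ, (γstar ζ * u ζ - h u ζ) ∂PZ)
    (ηQ ηM r B : ℝ)
    (hηQ0 : 0 < ηQ) (hηM : 0 < ηM)
    (hi : ∀ f ∈ F, r ^ 2 ≤ ∫ ζ, f ζ ^ 2 ∂PZ →
      ηQ * ∫ ζ, f ζ ^ 2 ∂PZ ≤ empMean z (fun ζ => f ζ ^ 2))
    (hii : ∀ f ∈ F, r ^ 2 ≤ ∫ ζ, f ζ ^ 2 ∂PZ → |M f| ≤ ηM * ∫ ζ, f ζ ^ 2 ∂PZ)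
    (hiii : ∀ f ∈ F, (∫ ζ, f ζ ^ 2 ∂PZ) ≤ r ^ 2 → |M f| ≤ ηM * r ^ 2)
    (g : 𝒵 → ℝ)
    (hghalf : (fun ζ => g ζ / 2) ∈ F)
    (hgh : ∀ ζ, h g ζ = 2 * h (fun ξ => g ξ / 2) ζ)
    (hgB : empMean z (fun ζ => g ζ ^ 2) ≤ B)
    (hgneg : empMean z (h g) + M g ≤ 0) :
    empMean z (h g) ≤ max (ηM * B / (2 * ηQ)) (2 * ηM * r ^ 2) := by
  set f : 𝒵 → ℝ := fun ζ => g ζ / 2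
  have hMg : M g = 2 * M f := by
    have hpt : (fun ζ => γstar ζ * g ζ - h g ζ) = fun ζ => 2 * (γstar ζ * f ζ - h f ζ) := by
      funext ζ
      rw [hgh ζ]
      ring
    rw [hM, hM, hpt, empMean_sub_integral_const_mul]
  have hEnf : empMean z (fun ζ => f ζ ^ 2) ≤ B / 4 := by
    have hsq : (fun ζ => f ζ ^ 2) = fun ζ => 4⁻¹ * g ζ ^ 2 := by
      funext ζ
      ring
    rw [hsq, empMean_const_mul]
    linarith
  have hMf := abs_le_max_of_quadratic_bounds hηQ0 hηM (hi f hghalf) (hii f hghalf)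
    (hiii f hghalf) hEnf
  calc empMean z (h g) ≤ |M g| := by linarith [neg_le_abs (M g)]
    _ = 2 * |M f| := by rw [hMg, abs_mul, abs_two]
    _ ≤ 2 * max (ηM * (B / 4) / ηQ) (ηM * r ^ 2) := by gcongr
    _ = max (ηM * B / (2 * ηQ)) (2 * ηM * r ^ 2) := by
      rw [mul_max_of_nonneg _ _ zero_le_two]
      congr 1
      · field_simp
        ring
      · ring

/-- key deterministic bound; step in the proof of Theorem 2.
Under the empirical-process regularity conditions (i)–(iii) on the class `F`, any `g` with
`g/2 ∈ F`, `h(·,g) = 2·h(·,g/2)`, `E_n g² ≤ B`, `E_n h(·,g) ≥ 0` and `E_n h(·,g) + M(g) ≤ 0`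
satisfies `E_n h(·,g) ≤ max(η_M·B/(2·η_Q), 2·η_M·r²)`. -/
theorem deterministic_bound_for_h
    {𝒵 : Type*} [MeasurableSpace 𝒵] (PZ : Measure 𝒵) [IsProbabilityMeasure PZ]
    {n : ℕ} (hn : 0 < n) (z : Fin n → 𝒵)
    (F : Set (𝒵 → ℝ)) (hFne : F.Nonempty) (hFL2 : ∀ f ∈ F, MemLp f 2 PZ)
    (γstar : 𝒵 → ℝ) (hγL2 : MemLp γstar 2 PZ)
    (h : (𝒵 → ℝ) → 𝒵 → ℝ)
    (hintF : ∀ f ∈ F, Integrable (fun ζ => γstar ζ * f ζ - h f ζ) PZ)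
    (M : (𝒵 → ℝ) → ℝ)
    (hM : ∀ u, M u = empMean z (fun ζ => γstar ζ * u ζ - h u ζ) -
        ∫ ζ, (γstar ζ * u ζ - h u ζ) ∂PZ)
    (ηQ ηM r B : ℝ)
    (hηQ0 : 0 < ηQ) (hηQ1 : ηQ ≤ 1) (hηM : 0 < ηM) (hr : 0 < r) (hB : 0 < B)
    (hi : ∀ f ∈ F, r ^ 2 ≤ ∫ ζ, f ζ ^ 2 ∂PZ →
      ηQ * ∫ ζ, f ζ ^ 2 ∂PZ ≤ empMean z (fun ζ => f ζ ^ 2))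
    (hii : ∀ f ∈ F, r ^ 2 ≤ ∫ ζ, f ζ ^ 2 ∂PZ → |M f| ≤ ηM * ∫ ζ, f ζ ^ 2 ∂PZ)
    (hiii : ∀ f ∈ F, (∫ ζ, f ζ ^ 2 ∂PZ) ≤ r ^ 2 → |M f| ≤ ηM * r ^ 2)
    (g : 𝒵 → ℝ) (hgL2 : MemLp g 2 PZ)
    (hghalf : (fun ζ => g ζ / 2) ∈ F)
    (hgh : ∀ ζ, h g ζ = 2 * h (fun ξ => g ξ / 2) ζ)
    (hgint : Integrable (fun ζ => γstar ζ * g ζ - h g ζ) PZ)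
    (hgB : empMean z (fun ζ => g ζ ^ 2) ≤ B)
    (hgpos : 0 ≤ empMean z (h g))
    (hgneg : empMean z (h g) + M g ≤ 0) :
    empMean z (h g) ≤ max (ηM * B / (2 * ηQ)) (2 * ηM * r ^ 2) :=
  deterministic_bound_for_h_general PZ z F γstar h M hM ηQ ηM r B hηQ0 hηM hi hii hiii g hghalf hgh
    hgB hgneg
end

section
/- (Deterministic core of Theorem 2: the sample modulus of continuity is close to its Riesz-representer counterpart.) In the empirical/population notation, let F be nonempty, convex and centrosymmetric, let γ* ∈ L²(P_Z), and let h assign to each f in the linear span of F a P_Z-integrable function h(·, f): 𝒵 → ℝ, linearly in f, such that γ*·f is P_Z-integrable and the Riesz identity E[h(·, f)] = E[γ*·f] holds for every f in the span of F; define M(f) := E_n[γ*·f − h(·, f)] − E[γ*·f − h(·, f)]. Fix δ > 0 and constants η_Q ∈ (0, 1], η_M > 0, r > 0, and assume every f ∈ F satisfies: (i) if E f² ≥ r² then E_n f² ≥ η_Q·E f²; (ii) if E f² ≥ r² then |M(f)| ≤ η_M·E f²; (iii) if E f² ≤ r² then |M(f)| ≤ η_M·r². Let K := {f ∈ F : E_n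 f² ≤ δ²/(4n)}, suppose f* ∈ K maximizes f ↦ E_n h(·, f) over K and f̃ ∈ K maximizes f ↦ E_n[γ*·f] over K. Then |2·E_n h(·, f*) − 2·E_n[γ*·f̃]| ≤ 4·max(η_M·δ²/(2·η_Q·n), 2·η_M·r²). -/
/-!
On `F` (indeed on its span) the Riesz identity turns `M f` into `E_n[γ*·f] − E_n h(·, f)`. For `f ∈ K`, condition (i)
converts the empirical constraint `E_n f² ≤ δ²/(4n)` into a bound on `E f²` whenever `E f² ≥ r²`,
so (ii) and (iii) bound `|M f|` uniformly on `K`. Two functionals that are uniformly close on `K`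
have maxima over `K` that are equally close.
-/

open MeasureTheory

lemma empMean_sub {𝒵 : Type*} {n : ℕ} (z : Fin n → 𝒵) (u v : 𝒵 → ℝ) :
    empMean z (fun ζ => u ζ - v ζ) = empMean z u - empMean z v := by
  simp only [empMean, Finset.sum_sub_distrib, mul_sub]

lemma empMean_sub_sub_integral_of_integral_eq {𝒵 : Type*} [MeasurableSpace 𝒵] {μ : Measure 𝒵}
    {n : ℕ} (z : Fin n → 𝒵) {u v : 𝒵 → ℝ} (hu : Integrable u μ) (hv : Integrable v μ)
    (huv : ∫ ζ, v ζ ∂μ = ∫ ζ, u ζ ∂μ) :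
    empMean z (fun ζ => u ζ - v ζ) - ∫ ζ, (u ζ - v ζ) ∂μ = empMean z u - empMean z v := by
  rw [empMean_sub, integral_sub hu hv, huv, sub_self, sub_zero]

lemma abs_sub_le_of_isMaxOn {α β : Type*} [AddCommGroup β] [LinearOrder β]
    [IsOrderedAddMonoid β] {φ ψ : α → β} {s : Set α} {a b : α} {B : β}
    (ha : a ∈ s) (hb : b ∈ s) (hφ : IsMaxOn φ s a) (hψ : IsMaxOn ψ s b)
    (hclose : ∀ x ∈ s, |φ x - ψ x| ≤ B) : |φ a - ψ b| ≤ B := by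
  rw [abs_sub_le_iff]
  exact ⟨(sub_le_sub_left (hψ ha) _).trans (abs_sub_le_iff.1 (hclose a ha)).1,
    (sub_le_sub_left (hφ hb) _).trans (abs_sub_le_iff.1 (hclose b hb)).2⟩

lemma le_max_of_regime_bounds {q qn m c ηQ ηM ρ : ℝ} (hηQ : 0 < ηQ) (hηM : 0 ≤ ηM)
    (hqn : qn ≤ c) (hlower : ρ ≤ q → ηQ * q ≤ qn) (hlarge : ρ ≤ q → m ≤ ηM * q)
    (hsmall : q ≤ ρ → m ≤ ηM * ρ) : m ≤ max (ηM * (c / ηQ)) (ηM * ρ) := by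
  rcases le_total ρ q with hρq | hqρ
  · have hq : q ≤ c / ηQ := (le_div_iff₀' hηQ).2 ((hlower hρq).trans hqn)
    exact (hlarge hρq).trans ((mul_le_mul_of_nonneg_left hq hηM).trans (le_max_left _ _))
  · exact (hsmall hqρ).trans (le_max_right _ _)

theorem sample_modulus_close_to_riesz_modulus_general
    {𝒵 : Type*} [MeasurableSpace 𝒵] (PZ : Measure 𝒵)
    {n : ℕ} (z : Fin n → 𝒵)
    (F : Set (𝒵 → ℝ))
    (γstar : 𝒵 → ℝ)
    (h : (𝒵 → ℝ) → 𝒵 → ℝ)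
    (hint : ∀ f ∈ Submodule.span ℝ F,
      Integrable (h f) PZ ∧ Integrable (fun ζ => γstar ζ * f ζ) PZ)
    (hriesz : ∀ f ∈ Submodule.span ℝ F, (∫ ζ, h f ζ ∂PZ) = ∫ ζ, γstar ζ * f ζ ∂PZ)
    (M : (𝒵 → ℝ) → ℝ)
    (hM : ∀ u, M u = empMean z (fun ζ => γstar ζ * u ζ - h u ζ) -
        ∫ ζ, (γstar ζ * u ζ - h u ζ) ∂PZ)
    (δ ηQ ηM r : ℝ)
    (hηQ0 : 0 < ηQ) (hηM : 0 < ηM)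
    (hi : ∀ f ∈ F, r ^ 2 ≤ ∫ ζ, f ζ ^ 2 ∂PZ →
      ηQ * ∫ ζ, f ζ ^ 2 ∂PZ ≤ empMean z (fun ζ => f ζ ^ 2))
    (hii : ∀ f ∈ F, r ^ 2 ≤ ∫ ζ, f ζ ^ 2 ∂PZ → |M f| ≤ ηM * ∫ ζ, f ζ ^ 2 ∂PZ)
    (hiii : ∀ f ∈ F, (∫ ζ, f ζ ^ 2 ∂PZ) ≤ r ^ 2 → |M f| ≤ ηM * r ^ 2)
    (K : Set (𝒵 → ℝ))
    (hK : K = {f ∈ F | empMean z (fun ζ => f ζ ^ 2) ≤ δ ^ 2 / (4 * n)})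
    (fstar : 𝒵 → ℝ) (hfstarK : fstar ∈ K)
    (hfstarmax : ∀ f ∈ K, empMean z (h f) ≤ empMean z (h fstar))
    (ftilde : 𝒵 → ℝ) (hftildeK : ftilde ∈ K)
    (hftildemax : ∀ f ∈ K,
      empMean z (fun ζ => γstar ζ * f ζ) ≤ empMean z (fun ζ => γstar ζ * ftilde ζ)) :
    |2 * empMean z (h fstar) - 2 * empMean z (fun ζ => γstar ζ * ftilde ζ)| ≤
      4 * max (ηM * δ ^ 2 / (2 * ηQ * n)) (2 * ηM * r ^ 2) := by
  set B := max (ηM * δ ^ 2 / (2 * ηQ * n)) (2 * ηM * r ^ 2)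
  have hclose : ∀ f ∈ K, |empMean z (h f) - empMean z (fun ζ => γstar ζ * f ζ)| ≤ B := by
    rintro f hfK
    rw [hK] at hfK
    obtain ⟨hfF, hf_small⟩ := hfK
    have hspan : f ∈ Submodule.span ℝ F := Submodule.subset_span hfF
    have hMf : M f = empMean z (fun ζ => γstar ζ * f ζ) - empMean z (h f) :=
      (hM f).trans (empMean_sub_sub_integral_of_integral_eq z (hint f hspan).2
        (hint f hspan).1 (hriesz f hspan))
    rw [abs_sub_comm, ← hMf]
    refine (le_max_of_regime_bounds hηQ0 hηM.le hf_small (hi f hfF) (hii f hfF)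
      (hiii f hfF)).trans (max_le_max ?_ (by nlinarith [sq_nonneg r]))
    calc ηM * (δ ^ 2 / (4 * n) / ηQ) = ηM * δ ^ 2 / (2 * ηQ * n) / 2 := by ring
      _ ≤ ηM * δ ^ 2 / (2 * ηQ * n) := half_le_self (by positivity)
  have hmax : |empMean z (h fstar) - empMean z (fun ζ => γstar ζ * ftilde ζ)| ≤ B :=
    abs_sub_le_of_isMaxOn (φ := fun f => empMean z (h f))
      (ψ := fun f => empMean z (fun ζ => γstar ζ * f ζ)) hfstarK hftildeK
      (isMaxOn_iff.2 hfstarmax) (isMaxOn_iff.2 hftildemax) hclose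
  calc |2 * empMean z (h fstar) - 2 * empMean z (fun ζ => γstar ζ * ftilde ζ)|
      = 2 * |empMean z (h fstar) - empMean z (fun ζ => γstar ζ * ftilde ζ)| := by
        rw [← mul_sub, abs_mul, abs_two]
    _ ≤ 2 * B := by gcongr
    _ ≤ 4 * B := by linarith [(abs_nonneg _).trans hmax]

/-- deterministic core of Theorem 2: the sample modulus of continuity is
close to its Riesz-representer counterpart. If `f*` maximizes `E_n h(·,f)` and `f̃`
maximizes `E_n[γ*·f]` over `K = {f ∈ F : E_n f² ≤ δ²/(4n)}`, then under the regularity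
conditions (i)–(iii), `|2·E_n h(·,f*) − 2·E_n[γ*·f̃]| ≤ 4·max(η_M·δ²/(2·η_Q·n), 2·η_M·r²)`. -/
theorem sample_modulus_close_to_riesz_modulus
    {𝒵 : Type*} [MeasurableSpace 𝒵] (PZ : Measure 𝒵) [IsProbabilityMeasure PZ]
    {n : ℕ} (hn : 0 < n) (z : Fin n → 𝒵)
    (F : Set (𝒵 → ℝ)) (hFne : F.Nonempty) (hFconv : Convex ℝ F)
    (hFsymm : ∀ f ∈ F, (-f) ∈ F) (hFL2 : ∀ f ∈ F, MemLp f 2 PZ)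
    (γstar : 𝒵 → ℝ) (hγL2 : MemLp γstar 2 PZ)
    (h : (𝒵 → ℝ) → 𝒵 → ℝ)
    (hlin : ∀ f₁ ∈ Submodule.span ℝ F, ∀ f₂ ∈ Submodule.span ℝ F, ∀ a b : ℝ, ∀ ζ : 𝒵,
      h (a • f₁ + b • f₂) ζ = a * h f₁ ζ + b * h f₂ ζ)
    (hint : ∀ f ∈ Submodule.span ℝ F,
      Integrable (h f) PZ ∧ Integrable (fun ζ => γstar ζ * f ζ) PZ)
    (hriesz : ∀ f ∈ Submodule.span ℝ F, (∫ ζ, h f ζ ∂PZ) = ∫ ζ, γstar ζ * f ζ ∂PZ)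
    (M : (𝒵 → ℝ) → ℝ)
    (hM : ∀ u, M u = empMean z (fun ζ => γstar ζ * u ζ - h u ζ) -
        ∫ ζ, (γstar ζ * u ζ - h u ζ) ∂PZ)
    (δ ηQ ηM r : ℝ)
    (hδ : 0 < δ) (hηQ0 : 0 < ηQ) (hηQ1 : ηQ ≤ 1) (hηM : 0 < ηM) (hr : 0 < r)
    (hi : ∀ f ∈ F, r ^ 2 ≤ ∫ ζ, f ζ ^ 2 ∂PZ →
      ηQ * ∫ ζ, f ζ ^ 2 ∂PZ ≤ empMean z (fun ζ => f ζ ^ 2))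
    (hii : ∀ f ∈ F, r ^ 2 ≤ ∫ ζ, f ζ ^ 2 ∂PZ → |M f| ≤ ηM * ∫ ζ, f ζ ^ 2 ∂PZ)
    (hiii : ∀ f ∈ F, (∫ ζ, f ζ ^ 2 ∂PZ) ≤ r ^ 2 → |M f| ≤ ηM * r ^ 2)
    (K : Set (𝒵 → ℝ))
    (hK : K = {f ∈ F | empMean z (fun ζ => f ζ ^ 2) ≤ δ ^ 2 / (4 * n)})
    (fstar : 𝒵 → ℝ) (hfstarK : fstar ∈ K)
    (hfstarmax : ∀ f ∈ K, empMean z (h f) ≤ empMean z (h fstar))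
    (ftilde : 𝒵 → ℝ) (hftildeK : ftilde ∈ K)
    (hftildemax : ∀ f ∈ K,
      empMean z (fun ζ => γstar ζ * f ζ) ≤ empMean z (fun ζ => γstar ζ * ftilde ζ)) :
    |2 * empMean z (h fstar) - 2 * empMean z (fun ζ => γstar ζ * ftilde ζ)| ≤
      4 * max (ηM * δ ^ 2 / (2 * ηQ * n)) (2 * ηM * r ^ 2) :=
  sample_modulus_close_to_riesz_modulus_general PZ z F γstar h hint hriesz M hM δ ηQ ηM r hηQ0 hηM
    hi hii hiii K hK fstar hfstarK hfstarmax ftilde hftildeK hftildemax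
end

section
/- (Uniform smallness of the modulus solutions at the design points; step in the proof of Theorem 3.) Let (𝒵, d) be a metric space, let z_1, z_2, … be a sequence of points in 𝒵, and let (f_n)_{n≥1} be functions 𝒵 → ℝ. Assume: (a) there is ḡ: (0, ∞) → [0, ∞) with ḡ(η) → 0 as η → 0⁺ such that |f_n(z) − f_n(z′)| ≤ ḡ(η) for every n and all z, z′ ∈ 𝒵 with d(z, z′) ≤ η; (b) for every η > 0, min_{1≤i≤n} #{1 ≤ j ≤ n : d(z_j, z_i) ≤ η} → ∞ as n → ∞; (c) there is δ > 0 with Σ_{i=1}^n f_n(z_i)² ≤ δ²/4 for every n. Then max_{1≤i≤n} f_n(z_i)² → 0 as n → ∞. -/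
open Filter Topology

/-- uniform smallness of the modulus solutions at the design points; step in
the proof of Theorem 3. If `(f_n)` is uniformly equicontinuous with modulus `ḡ(η) → 0`,
every design point has an unboundedly growing number of `η`-neighbors among the designs, and
`Σ_{i=1}^n f_n(z_i)² ≤ δ²/4` for all `n`, then `max_{1≤i≤n} f_n(z_i)² → 0`. -/
theorem modulus_solution_sup_to_zero
    {𝒵 : Type*} [MetricSpace 𝒵] (z : ℕ → 𝒵) (f : ℕ → 𝒵 → ℝ)
    (gbar : ℝ → ℝ)
    (hgbar_nonneg : ∀ η : ℝ, 0 < η → 0 ≤ gbar η)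
    (hgbar_lim : Tendsto gbar (𝓝[>] (0 : ℝ)) (𝓝 0))
    (hequicont : ∀ (n : ℕ) (η : ℝ), 0 < η → ∀ ζ ζ' : 𝒵, dist ζ ζ' ≤ η →
      |f n ζ - f n ζ'| ≤ gbar η)
    (hneighbors : ∀ η : ℝ, 0 < η → ∀ N : ℕ, ∀ᶠ n in atTop,
      ∀ i ∈ Finset.range n,
        N ≤ ((Finset.range n).filter (fun j => dist (z j) (z i) ≤ η)).card)
    (δ : ℝ) (hδ : 0 < δ)
    (hsum : ∀ n : ℕ, (∑ i ∈ Finset.range n, f n (z i) ^ 2) ≤ δ ^ 2 / 4) :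
    ∀ ε : ℝ, 0 < ε → ∀ᶠ n in atTop, ∀ i ∈ Finset.range n, f n (z i) ^ 2 < ε := by
  intro ε hε
  have hsε : 0 < Real.sqrt ε / 2 := by
    have := Real.sqrt_pos.mpr hε; linarith
  obtain ⟨η, hη, hgη⟩ : ∃ η > 0, gbar η < Real.sqrt ε / 2 := by
    have := (hgbar_lim.eventually (gt_mem_nhds hsε)).and self_mem_nhdsWithin
    obtain ⟨η, h1, h2⟩ := this.exists
    exact ⟨η, h2, h1⟩
  obtain ⟨N, hN⟩ := exists_nat_gt (δ ^ 2 / ε)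
  filter_upwards [hneighbors η hη (N + 1)] with n hn i hi
  by_contra hcon
  push_neg at hcon
  set S := (Finset.range n).filter (fun j => dist (z j) (z i) ≤ η) with hS
  have hsq : Real.sqrt ε ^ 2 = ε := Real.sq_sqrt hε.le
  have hfi : Real.sqrt ε ≤ |f n (z i)| := by
    have := Real.sqrt_le_sqrt hcon
    rwa [Real.sqrt_sq_eq_abs] at this
  have key : ∀ j ∈ S, ε / 4 ≤ f n (z j) ^ 2 := by
    intro j hj
    have hd : dist (z j) (z i) ≤ η := (Finset.mem_filter.mp hj).2
    have h1 : |f n (z j) - f n (z i)| ≤ gbar η := hequicont n η hη _ _ hd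
    have h2 : Real.sqrt ε / 2 ≤ |f n (z j)| := by
      have h3 := abs_sub_abs_le_abs_sub (f n (z i)) (f n (z j))
      rw [abs_sub_comm] at h3
      linarith
    have h4 : (Real.sqrt ε / 2) ^ 2 ≤ f n (z j) ^ 2 := by
      rw [← sq_abs (f n (z j))]
      exact pow_le_pow_left₀ (by positivity) h2 2
    nlinarith
  have hcard : (N + 1 : ℝ) ≤ (S.card : ℝ) := by exact_mod_cast hn i hi
  have hsum1 : (S.card : ℝ) * (ε / 4) ≤ ∑ j ∈ S, f n (z j) ^ 2 := by
    have := Finset.card_nsmul_le_sum S (fun j => f n (z j) ^ 2) (ε / 4) key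
    simpa [nsmul_eq_mul] using this
  have hsum2 : (∑ j ∈ S, f n (z j) ^ 2) ≤ ∑ j ∈ Finset.range n, f n (z j) ^ 2 :=
    Finset.sum_le_sum_of_subset_of_nonneg (Finset.filter_subset _ _)
      (fun j _ _ => sq_nonneg _)
  have hsum3 := hsum n
  have hNε : δ ^ 2 < (N : ℝ) * ε := by
    rw [div_lt_iff₀ hε] at hN; linarith
  nlinarith
end

section
/- (Weighted weak law of large numbers for triangular arrays with 1 + η moments; step in the proof of Theorem 3.) Let η ∈ (0, 1], K > 0 and A > 0. For each n, let ξ_{n,1}, …, ξ_{n,n} be independent real random variables with E[ξ_{n,i}] = 0 and E[|ξ_{n,i}|^{1+η}] ≤ K for all i ≤ n, and let a_{n,1}, …, a_{n,n} be nonnegative real numbers with Σ_{i=1}^n a_{n,i} ≤ A and max_{1≤i≤n} a_{n,i} → 0 as n → ∞. Then Σ_{i=1}^n a_{n,i}·ξ_{n,i} → 0 in probability. -/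
/-!
Truncate each `ξ_{n,i}` at a level `M` to `Y_{n,i}`. The `Y_{n,i}` are independent and bounded, and
`E[Y²] ≤ M^{1-η} E|ξ|^{1+η}`, so by Chebyshev their weighted centered sum exceeds `ε/2` with
probability `O(max_i a_{n,i} · A · M^{1-η} K / ε²)`. The tails satisfy
`E|ξ - Y| ≤ E|ξ|^{1+η} / M^η`, so by Markov their weighted centered sum exceeds `ε/2` with
probability `O(A K / (ε M^η))`. Choosing `M` large first and then `n` large makes both small.
-/

open MeasureTheory ProbabilityTheory Filter Topology

section Truncation

variable {α : Type*} {η M : ℝ}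

lemma sq_truncation_le (hη : η ≤ 1) (hM : 0 ≤ M) (f : α → ℝ) (x : α) :
    truncation f M x ^ 2 ≤ M ^ (1 - η) * |f x| ^ (1 + η) := by
  by_cases hx : f x ∈ Set.Ioc (-M) M
  · have hxM : |f x| ≤ M := abs_le.2 ⟨hx.1.le, hx.2⟩
    have two : (1 - η) + (1 + η) = (2 : ℝ) := by ring
    calc truncation f M x ^ 2 = |f x| ^ (1 - η) * |f x| ^ (1 + η) := by
          rw [← Real.rpow_add' (abs_nonneg _) (by rw [two]; norm_num), two, Real.rpow_two, sq_abs]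
          simp [truncation, Set.indicator_of_mem hx]
      _ ≤ M ^ (1 - η) * |f x| ^ (1 + η) := by gcongr
  · simp only [truncation, Function.comp_apply, Set.indicator_of_notMem hx]
    simp only [ne_eq, OfNat.ofNat_ne_zero, not_false_eq_true, zero_pow]
    positivity

lemma abs_sub_truncation_le (hη : 0 ≤ η) (hM : 0 < M) (f : α → ℝ) (x : α) :
    |f x - truncation f M x| ≤ |f x| ^ (1 + η) / M ^ η := by
  by_cases hx : f x ∈ Set.Ioc (-M) M
  · simp only [truncation, Function.comp_apply, Set.indicator_of_mem hx, id, sub_self, abs_zero]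
    positivity
  · have hMx : M ≤ |f x| := by
      rw [Set.mem_Ioc, not_and_or, not_lt, not_le] at hx
      rcases hx with hx | hx
      · exact le_abs.2 (Or.inr (by linarith))
      · exact le_abs.2 (Or.inl hx.le)
    simp only [truncation, Function.comp_apply, Set.indicator_of_notMem hx, sub_zero]
    rw [le_div_iff₀ (by positivity), Real.rpow_add' (abs_nonneg _) (by linarith), Real.rpow_one]
    gcongr

end Truncation

section Moments

variable {Ω : Type*} [MeasurableSpace Ω] {P : Measure Ω} {X : Ω → ℝ} {η M : ℝ}

lemma variance_truncation_le [IsProbabilityMeasure P] (hη : η ≤ 1) (hM : 0 ≤ M)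
    (hX : AEStronglyMeasurable X P) (hmom : Integrable (fun ω ↦ |X ω| ^ (1 + η)) P) :
    variance (truncation X M) P ≤ M ^ (1 - η) * ∫ ω, |X ω| ^ (1 + η) ∂P := by
  refine (variance_le_expectation_sq hX.truncation).trans ?_
  rw [← integral_const_mul]
  exact integral_mono hX.memLp_truncation.integrable_sq (hmom.const_mul _)
    fun ω ↦ sq_truncation_le hη hM X ω

lemma integral_abs_sub_truncation_le [IsFiniteMeasure P] (hη : 0 ≤ η) (hM : 0 < M)
    (hX : Integrable X P) (hmom : Integrable (fun ω ↦ |X ω| ^ (1 + η)) P) :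
    ∫ ω, |X ω - truncation X M ω| ∂P ≤ (∫ ω, |X ω| ^ (1 + η) ∂P) / M ^ η := by
  rw [← integral_div]
  exact integral_mono (hX.sub hX.1.integrable_truncation).abs (hmom.div_const _)
    fun ω ↦ abs_sub_truncation_le hη hM X ω

lemma integral_abs_sub_integral_le [IsProbabilityMeasure P] (hX : Integrable X P) :
    ∫ ω, |X ω - ∫ ω', X ω' ∂P| ∂P ≤ 2 * ∫ ω, |X ω| ∂P := by
  calc ∫ ω, |X ω - ∫ ω', X ω' ∂P| ∂P ≤ ∫ ω, (|X ω| + |∫ ω', X ω' ∂P|) ∂P :=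
        integral_mono (hX.sub (integrable_const _)).abs (hX.abs.add (integrable_const _))
          fun ω ↦ abs_sub _ _
    _ = (∫ ω, |X ω| ∂P) + |∫ ω', X ω' ∂P| := by
        rw [integral_add hX.abs (integrable_const _), integral_const, probReal_univ, one_smul]
    _ ≤ 2 * ∫ ω, |X ω| ∂P := by linarith [abs_integral_le_integral_abs (f := X) (μ := P)]

lemma meas_abs_ge_le_integral_abs_div [IsFiniteMeasure P] (hX : Integrable X P) {r : ℝ}
    (hr : 0 < r) : P {ω | r ≤ |X ω|} ≤ ENNReal.ofReal ((∫ ω, |X ω| ∂P) / r) := by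
  rw [← ofReal_measureReal]
  refine ENNReal.ofReal_le_ofReal ((le_div_iff₀' hr).2 ?_)
  exact mul_meas_ge_le_integral_of_nonneg (ae_of_all _ fun ω ↦ abs_nonneg _) hX.abs r

end Moments

section WeightedSums

variable {Ω ι : Type*} [MeasurableSpace Ω] {P : Measure Ω}

lemma meas_abs_add_ge_le (f g : Ω → ℝ) {ε : ℝ} :
    P {ω | ε ≤ |f ω + g ω|} ≤ P {ω | ε / 2 ≤ |f ω|} + P {ω | ε / 2 ≤ |g ω|} := by
  refine (measure_mono fun ω hω ↦ ?_).trans (measure_union_le _ _)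
  by_contra h
  simp only [Set.mem_union, Set.mem_ofPred_eq, not_or, not_le] at h hω
  linarith [abs_add_le (f ω) (g ω)]

lemma meas_abs_weighted_sum_sub_ge_le [IsFiniteMeasure P] {X : ι → Ω → ℝ} (hX : iIndepFun X P)
    {s : Finset ι} (h2 : ∀ i ∈ s, MemLp (X i) 2 P) (a : ι → ℝ) {r : ℝ} (hr : 0 < r) :
    P {ω | r ≤ |∑ i ∈ s, a i * X i ω - ∫ ω', ∑ i ∈ s, a i * X i ω' ∂P|} ≤
      ENNReal.ofReal ((∑ i ∈ s, a i ^ 2 * variance (X i) P) / r ^ 2) := by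
  have haX : ∀ i ∈ s, MemLp (fun ω ↦ a i * X i ω) 2 P := fun i hi ↦ (h2 i hi).const_mul (a i)
  have hpair : Set.Pairwise s fun i j ↦ (fun ω ↦ a i * X i ω) ⟂ᵢ[P] fun ω ↦ a j * X j ω :=
    fun i _ j _ hij ↦
      (hX.indepFun hij).comp (measurable_const_mul (a i)) (measurable_const_mul (a j))
  simpa only [IndepFun.variance_sum haX hpair, variance_const_mul, Finset.sum_apply] using
    meas_ge_le_variance_div_sq (memLp_finsetSum' s haX) hr

end WeightedSums

section KeyEstimate

variable {Ω ι : Type*} [MeasurableSpace Ω] {P : Measure Ω} [IsProbabilityMeasure P]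
  {X : ι → Ω → ℝ} {s : Finset ι} {a : ι → ℝ} {η K M A r : ℝ}

lemma meas_abs_weighted_truncation_sum_sub_ge_le (hX : iIndepFun X P) (hη : η ≤ 1) (hK : 0 ≤ K)
    (hM : 0 ≤ M) (hmeas : ∀ i ∈ s, AEStronglyMeasurable (X i) P)
    (hmomint : ∀ i ∈ s, Integrable (fun ω ↦ |X i ω| ^ (1 + η)) P)
    (hmom : ∀ i ∈ s, ∫ ω, |X i ω| ^ (1 + η) ∂P ≤ K) {c : ℝ} (hc : 0 ≤ c)
    (ha : ∀ i ∈ s, 0 ≤ a i) (hac : ∀ i ∈ s, a i ≤ c) (hA : ∑ i ∈ s, a i ≤ A) (hr : 0 < r) :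
    P {ω | r ≤ |∑ i ∈ s, a i * truncation (X i) M ω -
        ∫ ω', ∑ i ∈ s, a i * truncation (X i) M ω' ∂P|} ≤
      ENNReal.ofReal (c * (A * M ^ (1 - η) * K / r ^ 2)) := by
  have hY : iIndepFun (fun i ↦ truncation (X i) M) P :=
    hX.comp _ fun _ ↦ measurable_id.indicator measurableSet_Ioc
  refine (meas_abs_weighted_sum_sub_ge_le hY (fun i hi ↦ (hmeas i hi).memLp_truncation) a
    hr).trans (ENNReal.ofReal_le_ofReal ?_)
  have hvar : ∑ i ∈ s, a i ^ 2 * variance (truncation (X i) M) P ≤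
      c * (A * (M ^ (1 - η) * K)) :=
    calc ∑ i ∈ s, a i ^ 2 * variance (truncation (X i) M) P
        ≤ ∑ i ∈ s, c * a i * (M ^ (1 - η) * K) := by
          refine Finset.sum_le_sum fun i hi ↦ ?_
          have hv := (variance_truncation_le hη hM (hmeas i hi) (hmomint i hi)).trans
            (mul_le_mul_of_nonneg_left (hmom i hi) (by positivity))
          have ha2 : a i ^ 2 ≤ c * a i := by nlinarith [ha i hi, hac i hi]
          exact mul_le_mul ha2 hv (variance_nonneg _ _) (by nlinarith [ha i hi, hac i hi])
      _ = c * ((∑ i ∈ s, a i) * (M ^ (1 - η) * K)) := by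
          rw [Finset.sum_mul, Finset.mul_sum]; simp only [mul_assoc]
      _ ≤ c * (A * (M ^ (1 - η) * K)) := by gcongr
  calc (∑ i ∈ s, a i ^ 2 * variance (truncation (X i) M) P) / r ^ 2
      ≤ c * (A * (M ^ (1 - η) * K)) / r ^ 2 := by gcongr
    _ = c * (A * M ^ (1 - η) * K / r ^ 2) := by ring

lemma meas_abs_weighted_tail_sum_sub_ge_le (hη : 0 ≤ η) (hK : 0 ≤ K) (hM : 0 < M)
    (hint : ∀ i ∈ s, Integrable (X i) P)
    (hmomint : ∀ i ∈ s, Integrable (fun ω ↦ |X i ω| ^ (1 + η)) P)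
    (hmom : ∀ i ∈ s, ∫ ω, |X i ω| ^ (1 + η) ∂P ≤ K)
    (ha : ∀ i ∈ s, 0 ≤ a i) (hA : ∑ i ∈ s, a i ≤ A) (hr : 0 < r) :
    P {ω | r ≤ |∑ i ∈ s, a i * (X i ω - truncation (X i) M ω) -
        ∫ ω', ∑ i ∈ s, a i * (X i ω' - truncation (X i) M ω') ∂P|} ≤
      ENNReal.ofReal (2 * A * K / r / M ^ η) := by
  have hZint : ∀ i ∈ s, Integrable (fun ω ↦ X i ω - truncation (X i) M ω) P :=
    fun i hi ↦ (hint i hi).sub (hint i hi).1.integrable_truncation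
  have hUint : Integrable (fun ω ↦ ∑ i ∈ s, a i * (X i ω - truncation (X i) M ω)) P :=
    integrable_finsetSum _ fun i hi ↦ (hZint i hi).const_mul (a i)
  refine (meas_abs_ge_le_integral_abs_div (hUint.sub (integrable_const _)) hr).trans
    (ENNReal.ofReal_le_ofReal ?_)
  have hU : ∫ ω, |∑ i ∈ s, a i * (X i ω - truncation (X i) M ω)| ∂P ≤ A * (K / M ^ η) :=
    calc ∫ ω, |∑ i ∈ s, a i * (X i ω - truncation (X i) M ω)| ∂P
        ≤ ∫ ω, ∑ i ∈ s, a i * |X i ω - truncation (X i) M ω| ∂P := by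
          refine integral_mono hUint.abs
            (integrable_finsetSum _ fun i hi ↦ (hZint i hi).abs.const_mul (a i)) fun ω ↦ ?_
          refine (Finset.abs_sum_le_sum_abs _ _).trans_eq (Finset.sum_congr rfl fun i hi ↦ ?_)
          rw [abs_mul, abs_of_nonneg (ha i hi)]
      _ = ∑ i ∈ s, a i * ∫ ω, |X i ω - truncation (X i) M ω| ∂P := by
          rw [integral_finsetSum _ fun i hi ↦ (hZint i hi).abs.const_mul (a i)]
          simp only [integral_const_mul]
      _ ≤ ∑ i ∈ s, a i * (K / M ^ η) := by
          refine Finset.sum_le_sum fun i hi ↦ mul_le_mul_of_nonneg_left ?_ (ha i hi)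
          exact (integral_abs_sub_truncation_le hη hM (hint i hi) (hmomint i hi)).trans
            (by gcongr; exact hmom i hi)
      _ ≤ A * (K / M ^ η) := by rw [← Finset.sum_mul]; gcongr
  calc (∫ ω, |_ - _| ∂P) / r ≤ 2 * (A * (K / M ^ η)) / r := by
        gcongr
        exact (integral_abs_sub_integral_le hUint).trans (by gcongr)
    _ = 2 * A * K / r / M ^ η := by ring

theorem meas_abs_weighted_sum_ge_le (hX : iIndepFun X P) (hη0 : 0 ≤ η) (hη1 : η ≤ 1)
    (hK : 0 ≤ K) (hM : 0 < M) (hint : ∀ i ∈ s, Integrable (X i) P)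
    (hmean : ∀ i ∈ s, ∫ ω, X i ω ∂P = 0)
    (hmomint : ∀ i ∈ s, Integrable (fun ω ↦ |X i ω| ^ (1 + η)) P)
    (hmom : ∀ i ∈ s, ∫ ω, |X i ω| ^ (1 + η) ∂P ≤ K) {c : ℝ} (hc : 0 ≤ c)
    (ha : ∀ i ∈ s, 0 ≤ a i) (hac : ∀ i ∈ s, a i ≤ c) (hA : ∑ i ∈ s, a i ≤ A) {ε : ℝ}
    (hε : 0 < ε) :
    P {ω | ε ≤ |∑ i ∈ s, a i * X i ω|} ≤
      ENNReal.ofReal (c * (A * M ^ (1 - η) * K / (ε / 2) ^ 2)) +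
        ENNReal.ofReal (2 * A * K / (ε / 2) / M ^ η) := by
  set T := fun ω ↦ ∑ i ∈ s, a i * truncation (X i) M ω
  set U := fun ω ↦ ∑ i ∈ s, a i * (X i ω - truncation (X i) M ω)
  have hTU : ∀ ω, T ω + U ω = ∑ i ∈ s, a i * X i ω := fun ω ↦ by
    simp only [T, U, ← Finset.sum_add_distrib, ← mul_add, add_sub_cancel]
  have hTint : Integrable T P :=
    integrable_finsetSum _ fun i hi ↦ (hint i hi).1.integrable_truncation.const_mul (a i)
  have hUint : Integrable U P := integrable_finsetSum _ fun i hi ↦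
    ((hint i hi).sub (hint i hi).1.integrable_truncation).const_mul (a i)
  have hmeanTU : (∫ ω, T ω ∂P) + ∫ ω, U ω ∂P = 0 := by
    rw [← integral_add hTint hUint]
    simp only [hTU]
    rw [integral_finsetSum _ fun i hi ↦ (hint i hi).const_mul _]
    exact Finset.sum_eq_zero fun i hi ↦ by rw [integral_const_mul, hmean i hi, mul_zero]
  have hsplit : ∀ ω, ∑ i ∈ s, a i * X i ω = (T ω - ∫ ω', T ω' ∂P) + (U ω - ∫ ω', U ω' ∂P) :=
    fun ω ↦ by linarith [hTU ω]
  simp only [hsplit]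
  exact (meas_abs_add_ge_le _ _).trans (add_le_add
    (meas_abs_weighted_truncation_sum_sub_ge_le hX hη1 hK hM.le (fun i hi ↦ (hint i hi).1) hmomint
      hmom hc ha hac hA (half_pos hε))
    (meas_abs_weighted_tail_sum_sub_ge_le hη0 hK hM hint hmomint hmom ha hA (half_pos hε)))

end KeyEstimate

lemma tendsto_zero_of_le_ofReal_mul_add {α : Type*} {l : Filter α} {u : α → ENNReal}
    {F G : ℝ → ℝ} (hG : Tendsto G atTop (𝓝 0))
    (h : ∀ M > 0, ∀ c > 0, ∀ᶠ x in l, u x ≤ ENNReal.ofReal (c * F M) + ENNReal.ofReal (G M)) :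
    Tendsto u l (𝓝 0) := by
  refine ENNReal.tendsto_nhds_zero.2 fun δ hδ ↦ ?_
  obtain ⟨d, -, hd, hdδ⟩ := ENNReal.lt_iff_exists_real_btwn.1 hδ
  rw [ENNReal.ofReal_pos] at hd
  obtain ⟨M, hGM, hM⟩ := ((hG.eventually (gt_mem_nhds (half_pos hd))).and
    (eventually_gt_atTop 0)).exists
  set c := d / 2 / (|F M| + 1)
  have hc : 0 < c := by positivity
  have hcF : c * F M ≤ d / 2 :=
    calc c * F M ≤ c * (|F M| + 1) := by gcongr; linarith [le_abs_self (F M)]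
      _ = d / 2 := div_mul_cancel₀ _ (by positivity)
  filter_upwards [h M hM c hc] with x hx
  calc u x ≤ ENNReal.ofReal (c * F M) + ENNReal.ofReal (G M) := hx
    _ ≤ ENNReal.ofReal (d / 2) + ENNReal.ofReal (d / 2) := by gcongr
    _ = ENNReal.ofReal d := by rw [← ENNReal.ofReal_add (by positivity) (by positivity), add_halves]
    _ ≤ δ := hdδ.le

theorem weighted_triangular_wlln_general
    {Ω : Type*} [MeasurableSpace Ω] (P : Measure Ω) [IsProbabilityMeasure P]
    (η K A : ℝ) (hη0 : 0 < η) (hη1 : η ≤ 1) (hK : 0 < K)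
    (ξ : ℕ → ℕ → Ω → ℝ)
    (hindep : ∀ n : ℕ, iIndepFun (fun i : Fin n => ξ n i) P)
    (hint : ∀ n, ∀ i ∈ Finset.range n, Integrable (ξ n i) P)
    (hmean : ∀ n, ∀ i ∈ Finset.range n, (∫ ω, ξ n i ω ∂P) = 0)
    (hmomint : ∀ n, ∀ i ∈ Finset.range n, Integrable (fun ω => |ξ n i ω| ^ (1 + η)) P)
    (hmom : ∀ n, ∀ i ∈ Finset.range n, (∫ ω, |ξ n i ω| ^ (1 + η) ∂P) ≤ K)
    (a : ℕ → ℕ → ℝ)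
    (ha_nonneg : ∀ n, ∀ i ∈ Finset.range n, 0 ≤ a n i)
    (ha_sum : ∀ n : ℕ, (∑ i ∈ Finset.range n, a n i) ≤ A)
    (ha_max : ∀ ε : ℝ, 0 < ε → ∀ᶠ n in atTop, ∀ i ∈ Finset.range n, a n i < ε) :
    TendstoInMeasure P
      (fun (n : ℕ) ω => ∑ i ∈ Finset.range n, a n i * ξ n i ω)
      atTop (fun _ => 0) := by
  rw [tendstoInMeasure_iff_dist]
  intro ε hε
  refine tendsto_zero_of_le_ofReal_mul_add (F := fun M ↦ A * M ^ (1 - η) * K / (ε / 2) ^ 2)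
    (tendsto_const_nhds (x := 2 * A * K / (ε / 2)).div_atTop (tendsto_rpow_atTop hη0))
    fun M hM c hc ↦ ?_
  filter_upwards [ha_max c hc] with n hn
  have hmem (i : Fin n) : (i : ℕ) ∈ Finset.range n := Finset.mem_range.2 i.isLt
  simpa [Real.dist_eq, Finset.sum_range] using
    meas_abs_weighted_sum_ge_le (hindep n) (s := Finset.univ) hη0.le hη1 hK.le hM
      (fun i _ ↦ hint n i (hmem i)) (fun i _ ↦ hmean n i (hmem i)) (fun i _ ↦ hmomint n i (hmem i))
      (fun i _ ↦ hmom n i (hmem i)) hc.le (fun i _ ↦ ha_nonneg n i (hmem i))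
      (fun i _ ↦ (hn i (hmem i)).le) (by simpa [Finset.sum_range] using ha_sum n) hε

/-- weighted weak law of large numbers for triangular arrays with `1+η`
moments. If for each `n` the `ξ_{n,i}`, `i < n`, are independent, centered, with
`E|ξ_{n,i}|^{1+η} ≤ K`, and the nonnegative weights satisfy `Σ a_{n,i} ≤ A` and
`max_i a_{n,i} → 0`, then `Σ a_{n,i}·ξ_{n,i} →ₚ 0`. -/
theorem weighted_triangular_wlln
    {Ω : Type*} [MeasurableSpace Ω] (P : Measure Ω) [IsProbabilityMeasure P]
    (η K A : ℝ) (hη0 : 0 < η) (hη1 : η ≤ 1) (hK : 0 < K) (hA : 0 < A)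
    (ξ : ℕ → ℕ → Ω → ℝ)
    (hmeas : ∀ n i, Measurable (ξ n i))
    (hindep : ∀ n : ℕ, iIndepFun (fun i : Fin n => ξ n i) P)
    (hint : ∀ n, ∀ i ∈ Finset.range n, Integrable (ξ n i) P)
    (hmean : ∀ n, ∀ i ∈ Finset.range n, (∫ ω, ξ n i ω ∂P) = 0)
    (hmomint : ∀ n, ∀ i ∈ Finset.range n, Integrable (fun ω => |ξ n i ω| ^ (1 + η)) P)
    (hmom : ∀ n, ∀ i ∈ Finset.range n, (∫ ω, |ξ n i ω| ^ (1 + η) ∂P) ≤ K)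
    (a : ℕ → ℕ → ℝ)
    (ha_nonneg : ∀ n, ∀ i ∈ Finset.range n, 0 ≤ a n i)
    (ha_sum : ∀ n : ℕ, (∑ i ∈ Finset.range n, a n i) ≤ A)
    (ha_max : ∀ ε : ℝ, 0 < ε → ∀ᶠ n in atTop, ∀ i ∈ Finset.range n, a n i < ε) :
    TendstoInMeasure P
      (fun (n : ℕ) ω => ∑ i ∈ Finset.range n, a n i * ξ n i ω)
      atTop (fun _ => 0) :=
  weighted_triangular_wlln_general P η K A hη0 hη1 hK ξ hindep hint hmean hmomint hmom a ha_nonneg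
    ha_sum ha_max
end

section
/- (Appendix A.1: the Riesz representer for the partially linear model is the L² projection of the inverse-propensity weight function.) Let (Ω, 𝒜, P) be a probability space, X a random element of a measurable space 𝒳, and D a {0,1}-valued random variable. Let e(X) be a version of the conditional expectation E[D | X] and assume ε₀ ≤ e(X) ≤ 1 − ε₀ almost surely for some ε₀ ∈ (0, 1/2). Let S := { b·D + g(X) : b ∈ ℝ, g: 𝒳 → ℝ measurable with E[g(X)²] < ∞ } ⊆ L²(P). Define γ_FULL := D/e(X) − (1 − D)/(1 − e(X)) and γ_PL := (D − e(X))/E[(D − e(X))²] (the denominator is positive since E[(D − e(X))²] = E[e(X)(1 − e(X))] ≥ ε₀(1 − ε₀) > 0). Then γ_PL ∈ S, and for every γ ∈ S, E[(γ_FULL − γ)²] ≥ E[(γ_FULL − γ_PL)²], with equality if and only if γ = γ_PL almost surely. -/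
/-!
Write `R = D - e(X)`. Both `γ_FULL = R / (e(1 - e))(X)` and `γ_PL = R / V` have the form
`R ψ(X)` with `ψ` bounded. Since `E[R | X] = 0` and `E[R² | X] = e(1 - e)`, every
`γ = b D + g(X) ∈ S` satisfies `E[R ψ(X) γ] = b E[e(1 - e) ψ(X)]`, which equals `b` for both
weights (for `γ_PL` because `V = E[e(1 - e)]`). Hence `γ_FULL - γ_PL ⟂ S`, and since `S` is a
linear space containing `γ_PL`, Pythagoras makes `γ_PL` the a.e.-unique point of `S` closest
to `γ_FULL`.
-/

open MeasureTheory ProbabilityTheory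

section Projection

variable {Ω : Type*} [MeasurableSpace Ω] {μ : Measure Ω}

theorem integral_sq_sub_eq_add_of_orthogonal {F γ₀ γ : Ω → ℝ}
    (hF : MemLp F 2 μ) (hγ₀ : MemLp γ₀ 2 μ) (hγ : MemLp γ 2 μ)
    (horth : ∫ ω, (F ω - γ₀ ω) * (γ ω - γ₀ ω) ∂μ = 0) :
    ∫ ω, (F ω - γ ω) ^ 2 ∂μ = ∫ ω, (F ω - γ₀ ω) ^ 2 ∂μ + ∫ ω, (γ ω - γ₀ ω) ^ 2 ∂μ := by
  have hA : MemLp (F - γ₀) 2 μ := hF.sub hγ₀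
  have hB : MemLp (γ - γ₀) 2 μ := hγ.sub hγ₀
  have hexpand : ∀ ω, (F ω - γ ω) ^ 2 = (F ω - γ₀ ω) ^ 2 + (γ ω - γ₀ ω) ^ 2
      - 2 * ((F ω - γ₀ ω) * (γ ω - γ₀ ω)) := fun ω => by ring
  simp_rw [hexpand]
  rw [integral_sub, integral_add, integral_const_mul, horth, mul_zero, sub_zero]
  exacts [hA.integrable_sq, hB.integrable_sq, hA.integrable_sq.add hB.integrable_sq,
    (hA.integrable_mul hB).const_mul 2]

theorem integral_sq_sub_eq_zero_iff {γ γ₀ : Ω → ℝ} (hγ : MemLp γ 2 μ) (hγ₀ : MemLp γ₀ 2 μ) :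
    ∫ ω, (γ ω - γ₀ ω) ^ 2 ∂μ = 0 ↔ γ =ᵐ[μ] γ₀ := by
  rw [integral_eq_zero_iff_of_nonneg (fun ω => sq_nonneg (γ ω - γ₀ ω)) (hγ.sub hγ₀).integrable_sq]
  refine Filter.eventually_congr (Filter.Eventually.of_forall fun ω => ?_)
  simp [sub_eq_zero]

theorem integral_sq_sub_minimal_of_integral_mul_eq {S : Set (Ω → ℝ)} {F γ₀ : Ω → ℝ}
    (hF : MemLp F 2 μ) (hS : ∀ γ ∈ S, MemLp γ 2 μ) (hγ₀ : γ₀ ∈ S)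
    (hsub : ∀ γ ∈ S, γ - γ₀ ∈ S) (hrepr : ∀ γ ∈ S, ∫ ω, F ω * γ ω ∂μ = ∫ ω, γ₀ ω * γ ω ∂μ) :
    (∀ γ ∈ S, ∫ ω, (F ω - γ₀ ω) ^ 2 ∂μ ≤ ∫ ω, (F ω - γ ω) ^ 2 ∂μ) ∧
    (∀ γ ∈ S, (∫ ω, (F ω - γ ω) ^ 2 ∂μ = ∫ ω, (F ω - γ₀ ω) ^ 2 ∂μ ↔ γ =ᵐ[μ] γ₀)) := by
  have hpyth : ∀ γ ∈ S, ∫ ω, (F ω - γ ω) ^ 2 ∂μ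
      = ∫ ω, (F ω - γ₀ ω) ^ 2 ∂μ + ∫ ω, (γ ω - γ₀ ω) ^ 2 ∂μ := by
    intro γ hγ
    have hδ := hS _ (hsub γ hγ)
    refine integral_sq_sub_eq_add_of_orthogonal hF (hS γ₀ hγ₀) (hS γ hγ) ?_
    simp_rw [sub_mul]
    rw [integral_sub, sub_eq_zero]
    exacts [hrepr _ (hsub γ hγ), hF.integrable_mul hδ, (hS γ₀ hγ₀).integrable_mul hδ]
  refine ⟨fun γ hγ => ?_, fun γ hγ => ?_⟩
  · rw [hpyth γ hγ]
    exact le_add_of_nonneg_right (integral_nonneg fun ω => sq_nonneg _)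
  · rw [hpyth γ hγ, add_eq_left, integral_sq_sub_eq_zero_iff (hS γ hγ) (hS γ₀ hγ₀)]

end Projection

section CondExp

variable {Ω : Type*} {m m₀ : MeasurableSpace Ω} {μ : Measure Ω}

theorem integral_mul_condExp (hm : m ≤ m₀) [SigmaFinite (μ.trim hm)] {f g : Ω → ℝ}
    (hf : StronglyMeasurable[m] f) (hfg : Integrable (f * g) μ) (hg : Integrable g μ) :
    ∫ ω, f ω * μ[g | m] ω ∂μ = ∫ ω, f ω * g ω ∂μ := by
  rw [← integral_condExp hm (f := fun ω => f ω * g ω)]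
  exact integral_congr_ae (condExp_mul_of_stronglyMeasurable_left hf hfg hg).symm

theorem integral_sub_mul_eq_zero_of_ae_eq_condExp (hm : m ≤ m₀) [IsFiniteMeasure μ]
    {D e f : Ω → ℝ} (hD : MemLp D 2 μ) (he : e =ᵐ[μ] μ[D | m])
    (hf : StronglyMeasurable[m] f) (hf2 : MemLp f 2 μ) :
    ∫ ω, (D ω - e ω) * f ω ∂μ = 0 := by
  have he2 : MemLp e 2 μ := (hD.condExp one_le_two).ae_eq he.symm
  simp_rw [sub_mul]
  rw [integral_sub (f := fun ω => D ω * f ω) (g := fun ω => e ω * f ω)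
    (hD.integrable_mul hf2) (he2.integrable_mul hf2), sub_eq_zero]
  calc ∫ ω, D ω * f ω ∂μ = ∫ ω, f ω * D ω ∂μ := by simp_rw [mul_comm]
    _ = ∫ ω, f ω * μ[D | m] ω ∂μ :=
      (integral_mul_condExp hm hf (hf2.integrable_mul hD) (hD.integrable one_le_two)).symm
    _ = ∫ ω, e ω * f ω ∂μ := integral_congr_ae <| by
      filter_upwards [he] with ω hω
      rw [hω, mul_comm]

end CondExp

section Propensity

variable {Ω : Type*} {m m₀ : MeasurableSpace Ω} {μ : Measure Ω} {D e : Ω → ℝ}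

theorem integral_sub_mul_mul_add_eq (hm : m ≤ m₀) [IsFiniteMeasure μ] (hD : MemLp D 2 μ)
    (hD01 : ∀ ω, D ω = 0 ∨ D ω = 1) (he : e =ᵐ[μ] μ[D | m]) (hem : StronglyMeasurable[m] e)
    {ψ g : Ω → ℝ} (hψ : StronglyMeasurable[m] ψ) (hψ' : MemLp ψ ⊤ μ)
    (hg : StronglyMeasurable[m] g) (hg2 : MemLp g 2 μ) (b : ℝ) :
    ∫ ω, (D ω - e ω) * ψ ω * (b * D ω + g ω) ∂μ = b * ∫ ω, e ω * (1 - e ω) * ψ ω ∂μ := by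
  have he2 : MemLp e 2 μ := (hD.condExp one_le_two).ae_eq he.symm
  have h1e : MemLp (fun ω => ψ ω * (1 - e ω)) 2 μ := ((memLp_const 1).sub he2).mul' hψ'
  have hψg : MemLp (fun ω => ψ ω * g ω) 2 μ := hg2.mul' hψ'
  -- `D² = D` gives `(D - e) D = (D - e)(1 - e) + e(1 - e)`.
  have hsplit : ∀ ω, (D ω - e ω) * ψ ω * (b * D ω + g ω) = b * ((D ω - e ω) * (ψ ω * (1 - e ω)))
      + (D ω - e ω) * (ψ ω * g ω) + b * (e ω * (ψ ω * (1 - e ω))) := fun ω => by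
    rcases hD01 ω with h | h <;> rw [h] <;> ring
  simp_rw [hsplit]
  have h1e0 := integral_sub_mul_eq_zero_of_ae_eq_condExp (f := fun ω => ψ ω * (1 - e ω)) hm hD he
    (hψ.mul (stronglyMeasurable_const.sub hem)) h1e
  have hψg0 := integral_sub_mul_eq_zero_of_ae_eq_condExp (f := fun ω => ψ ω * g ω) hm hD he
    (hψ.mul hg) hψg
  have hT1 : Integrable (fun ω => (D ω - e ω) * (ψ ω * (1 - e ω))) μ :=
    (hD.sub he2).integrable_mul h1e
  have hT2 : Integrable (fun ω => (D ω - e ω) * (ψ ω * g ω)) μ := (hD.sub he2).integrable_mul hψg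
  have hT3 : Integrable (fun ω => e ω * (ψ ω * (1 - e ω))) μ := he2.integrable_mul h1e
  rw [integral_add, integral_add, integral_const_mul, integral_const_mul, h1e0, hψg0, mul_zero,
    zero_add, zero_add]
  · congr 2 with ω
    ring
  exacts [hT1.const_mul b, hT2, (hT1.const_mul b).add hT2, hT3.const_mul b]

theorem integral_sq_sub_eq (hm : m ≤ m₀) [IsFiniteMeasure μ] (hD : MemLp D 2 μ)
    (hD01 : ∀ ω, D ω = 0 ∨ D ω = 1) (he : e =ᵐ[μ] μ[D | m]) (hem : StronglyMeasurable[m] e) :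
    ∫ ω, (D ω - e ω) ^ 2 ∂μ = ∫ ω, e ω * (1 - e ω) ∂μ := by
  have h := integral_sub_mul_mul_add_eq hm hD hD01 he hem stronglyMeasurable_const
    (memLp_top_const 1) hem.neg ((hD.condExp one_le_two).ae_eq he.symm).neg 1
  simpa [sq, ← sub_eq_add_neg] using h

theorem integral_sq_sub_pos [IsProbabilityMeasure μ] (hD : MemLp D 2 μ)
    (hD01 : ∀ ω, D ω = 0 ∨ D ω = 1) (he : e =ᵐ[μ] μ[D | m]) {ε₀ : ℝ} (hε₀ : 0 < ε₀)
    (hebound : ∀ᵐ ω ∂μ, ε₀ ≤ e ω ∧ e ω ≤ 1 - ε₀) :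
    0 < ∫ ω, (D ω - e ω) ^ 2 ∂μ := by
  have he2 : MemLp e 2 μ := (hD.condExp one_le_two).ae_eq he.symm
  calc 0 < ε₀ ^ 2 := by positivity
    _ = ∫ _, ε₀ ^ 2 ∂μ := by simp
    _ ≤ ∫ ω, (D ω - e ω) ^ 2 ∂μ := by
      refine integral_mono_ae (integrable_const _) (hD.sub he2).integrable_sq ?_
      filter_upwards [hebound] with ω ⟨h0, h1⟩
      rcases hD01 ω with h | h <;> rw [h] <;> nlinarith

theorem integral_sub_div_integral_sq_mul_add_eq (hm : m ≤ m₀) [IsFiniteMeasure μ]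
    (hD : MemLp D 2 μ) (hD01 : ∀ ω, D ω = 0 ∨ D ω = 1) (he : e =ᵐ[μ] μ[D | m])
    (hem : StronglyMeasurable[m] e) (hV : ∫ ω, (D ω - e ω) ^ 2 ∂μ ≠ 0) {g : Ω → ℝ}
    (hg : StronglyMeasurable[m] g) (hg2 : MemLp g 2 μ) (b : ℝ) :
    ∫ ω, (D ω - e ω) / (∫ ω', (D ω' - e ω') ^ 2 ∂μ) * (b * D ω + g ω) ∂μ = b := by
  have h := integral_sub_mul_mul_add_eq hm hD hD01 he hem
    (ψ := fun _ => (∫ ω', (D ω' - e ω') ^ 2 ∂μ)⁻¹) stronglyMeasurable_const (memLp_top_const _)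
    hg hg2 b
  simp_rw [div_eq_mul_inv]
  rw [h, integral_mul_const, ← integral_sq_sub_eq hm hD hD01 he hem, mul_inv_cancel₀ hV, mul_one]

theorem ipw_ae_eq {ε₀ : ℝ} (hε₀ : 0 < ε₀) (hebound : ∀ᵐ ω ∂μ, ε₀ ≤ e ω ∧ e ω ≤ 1 - ε₀) :
    (fun ω => D ω / e ω - (1 - D ω) / (1 - e ω)) =ᵐ[μ]
      fun ω => (D ω - e ω) * (e ω * (1 - e ω))⁻¹ := by
  filter_upwards [hebound] with ω ⟨h0, h1⟩
  have : e ω ≠ 0 := by linarith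
  have : 1 - e ω ≠ 0 := by linarith
  field_simp
  ring

theorem memLp_top_inv_mul_one_sub (hem : AEStronglyMeasurable e μ) {ε₀ : ℝ} (hε₀ : 0 < ε₀)
    (hebound : ∀ᵐ ω ∂μ, ε₀ ≤ e ω ∧ e ω ≤ 1 - ε₀) :
    MemLp (fun ω => (e ω * (1 - e ω))⁻¹) ⊤ μ := by
  refine memLp_top_of_bound
    (hem.aemeasurable.mul (aemeasurable_const.sub hem.aemeasurable)).inv.aestronglyMeasurable
    (ε₀ * ε₀)⁻¹ ?_
  filter_upwards [hebound] with ω ⟨h0, h1⟩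
  have hprod : ε₀ * ε₀ ≤ e ω * (1 - e ω) := mul_le_mul h0 (by linarith) hε₀.le (by linarith)
  rw [norm_inv, Real.norm_of_nonneg ((mul_self_nonneg ε₀).trans hprod)]
  exact inv_anti₀ (by positivity) hprod

theorem memLp_ipw (hD : MemLp D 2 μ) (he2 : MemLp e 2 μ) {ε₀ : ℝ}
    (hε₀ : 0 < ε₀) (hebound : ∀ᵐ ω ∂μ, ε₀ ≤ e ω ∧ e ω ≤ 1 - ε₀) :
    MemLp (fun ω => D ω / e ω - (1 - D ω) / (1 - e ω)) 2 μ :=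
  ((memLp_top_inv_mul_one_sub he2.1 hε₀ hebound).mul' (hD.sub he2)).ae_eq
    (ipw_ae_eq hε₀ hebound).symm

theorem integral_ipw_mul_add_eq (hm : m ≤ m₀) [IsProbabilityMeasure μ] (hD : MemLp D 2 μ)
    (hD01 : ∀ ω, D ω = 0 ∨ D ω = 1) (he : e =ᵐ[μ] μ[D | m]) (hem : StronglyMeasurable[m] e)
    {ε₀ : ℝ} (hε₀ : 0 < ε₀) (hebound : ∀ᵐ ω ∂μ, ε₀ ≤ e ω ∧ e ω ≤ 1 - ε₀) {g : Ω → ℝ}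
    (hg : StronglyMeasurable[m] g) (hg2 : MemLp g 2 μ) (b : ℝ) :
    ∫ ω, (D ω / e ω - (1 - D ω) / (1 - e ω)) * (b * D ω + g ω) ∂μ = b := by
  have hψ : StronglyMeasurable[m] fun ω => (e ω * (1 - e ω))⁻¹ :=
    (hem.measurable.mul (measurable_const.sub hem.measurable)).inv.stronglyMeasurable
  have hψ' := memLp_top_inv_mul_one_sub (hem.mono hm).aestronglyMeasurable hε₀ hebound
  calc ∫ ω, (D ω / e ω - (1 - D ω) / (1 - e ω)) * (b * D ω + g ω) ∂μ
      = ∫ ω, (D ω - e ω) * (e ω * (1 - e ω))⁻¹ * (b * D ω + g ω) ∂μ :=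
        integral_congr_ae <| by
          filter_upwards [ipw_ae_eq hε₀ hebound] with ω hω
          rw [hω]
    _ = b * ∫ ω, e ω * (1 - e ω) * (e ω * (1 - e ω))⁻¹ ∂μ :=
        integral_sub_mul_mul_add_eq hm hD hD01 he hem hψ hψ' hg hg2 b
    _ = b := by
        rw [integral_congr_ae (g := fun _ => (1 : ℝ)), integral_const, probReal_univ, one_smul,
          mul_one]
        filter_upwards [hebound] with ω ⟨h0, h1⟩
        exact mul_inv_cancel₀ (mul_ne_zero (by linarith) (by linarith))

end Propensity

/-- Appendix A.1: the Riesz representer for the partially linear model is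
the L² projection of the inverse-propensity weight function. `γ_PL` belongs to the
partially linear class `S`, minimizes `E[(γ_FULL − γ)²]` over `S`, and is the a.s.-unique
minimizer. -/
theorem partially_linear_riesz_is_projection
    {Ω 𝒳 : Type*} [MeasurableSpace Ω] [MeasurableSpace 𝒳]
    (P : Measure Ω) [IsProbabilityMeasure P]
    (X : Ω → 𝒳) (hX : Measurable X)
    (D : Ω → ℝ) (hD : Measurable D) (hD01 : ∀ ω, D ω = 0 ∨ D ω = 1)
    (e : 𝒳 → ℝ) (hemeas : Measurable e)
    (he : (fun ω => e (X ω)) =ᵐ[P] P[D | MeasurableSpace.comap X inferInstance])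
    (ε₀ : ℝ) (hε₀ : ε₀ ∈ Set.Ioo (0 : ℝ) (1 / 2))
    (hebound : ∀ᵐ ω ∂P, ε₀ ≤ e (X ω) ∧ e (X ω) ≤ 1 - ε₀)
    (S : Set (Ω → ℝ))
    (hS : S = {γ : Ω → ℝ | ∃ (b : ℝ) (g : 𝒳 → ℝ), Measurable g ∧
      MemLp (fun ω => g (X ω)) 2 P ∧ γ = fun ω => b * D ω + g (X ω)})
    (γF γPL : Ω → ℝ)
    (hγF : γF = fun ω => D ω / e (X ω) - (1 - D ω) / (1 - e (X ω)))
    (hγPL : γPL = fun ω => (D ω - e (X ω)) / ∫ ω', (D ω' - e (X ω')) ^ 2 ∂P) :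
    γPL ∈ S ∧
    (∀ γ ∈ S, (∫ ω, (γF ω - γPL ω) ^ 2 ∂P) ≤ ∫ ω, (γF ω - γ ω) ^ 2 ∂P) ∧
    (∀ γ ∈ S, ((∫ ω, (γF ω - γ ω) ^ 2 ∂P) = ∫ ω, (γF ω - γPL ω) ^ 2 ∂P ↔ γ =ᵐ[P] γPL)) := by
  subst hγF hγPL
  have hm := hX.comap_le
  have hcomp {g : 𝒳 → ℝ} (hg : Measurable g) :
      StronglyMeasurable[MeasurableSpace.comap X inferInstance] fun ω => g (X ω) :=
    (hg.comp (comap_measurable X)).stronglyMeasurable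
  have hD2 : MemLp D 2 P := MemLp.of_bound hD.aestronglyMeasurable 1 <|
    ae_of_all _ fun ω => by rcases hD01 ω with h | h <;> simp [h]
  have he2 : MemLp (fun ω => e (X ω)) 2 P := (hD2.condExp one_le_two).ae_eq he.symm
  have hV := (integral_sq_sub_pos hD2 hD01 he hε₀.1 hebound).ne'
  set V := ∫ ω', (D ω' - e (X ω')) ^ 2 ∂P
  have hmem : (fun ω => (D ω - e (X ω)) / V) ∈ S := by
    rw [hS]
    exact ⟨V⁻¹, fun x => -(V⁻¹ * e x), (hemeas.const_mul _).neg, (he2.const_mul _).neg,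
      by ext; ring⟩
  subst hS
  refine ⟨hmem, integral_sq_sub_minimal_of_integral_mul_eq (memLp_ipw hD2 he2 hε₀.1 hebound) ?_
    hmem ?_ ?_⟩
  · rintro _ ⟨b, g, -, hg2, rfl⟩
    exact (hD2.const_mul b).add hg2
  · rintro _ ⟨b, g, hg, hg2, rfl⟩
    exact ⟨b - V⁻¹, fun x => g x + V⁻¹ * e x, hg.add (hemeas.const_mul _),
      hg2.add (he2.const_mul _), by ext; simp only [Pi.sub_apply]; ring⟩
  · rintro _ ⟨b, g, hg, hg2, rfl⟩
    rw [integral_ipw_mul_add_eq hm hD2 hD01 he (hcomp hemeas) hε₀.1 hebound (hcomp hg) hg2,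
      integral_sub_div_integral_sq_mul_add_eq hm hD2 hD01 he (hcomp hemeas) hV (hcomp hg) hg2]
end

section
/- (Section 3.4, Example 2: the heteroskedasticity-adjusted representer reproduces the partially linear coefficient.) Let X be a random element of a measurable space 𝒳 and D a {0,1}-valued random variable on a probability space (Ω, P). Let v be a measurable real-valued function of (D, X) with c₁ ≤ v ≤ c₂ almost surely for constants 0 < c₁ ≤ c₂ < ∞ (interpreted as the conditional variance σ²(D, X)). Define m(X) := E[D/v | X] / E[1/v | X], assume κ := E[(D/v)·(1 − m(X))] > 0, and set C̄ := 1/κ and γ^#(D, X) := C̄·(D − m(X))/v. Then for every β ∈ ℝ and every measurable g: 𝒳 → ℝ with E[g(X)²] < ∞, E[γ^#(D, X)·(D·β + g(X))] = β. -/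
/-!
With `E₁ = E[D/v | X]` and `E₂ = E[1/v | X]`, the residual `D/v - (E₁/E₂)·(1/v)` is orthogonal
to every `X`-measurable `h`: pulling `h·m(X)` out of the conditional expectation gives
`E[h·m(X)/v] = E[h·m(X)·E₂] = E[h·E₁] = E[h·D/v]`. The identity `m(X)·E₂ = E₁` survives the junk
value `0/0 = 0` because `0 ≤ D/v ≤ 1/v` forces `E₁ = 0` wherever `E₂ = 0`. Taking `h = g(X)` gives
`E[γ^#·g(X)] = 0`, while `D² = D` gives `E[γ^#·D] = C̄·κ = 1`.
-/

open MeasureTheory ProbabilityTheory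

section CondExpRatio

variable {Ω : Type*} {m m₀ : MeasurableSpace Ω} {μ : Measure Ω} {f₁ f₂ h : Ω → ℝ}

theorem integral_mul_condExp_of_stronglyMeasurable_s15 (hm : m ≤ m₀) [SigmaFinite (μ.trim hm)]
    (hh : StronglyMeasurable[m] h) (hf : Integrable f₁ μ) (hhf : Integrable (h * f₁) μ) :
    ∫ ω, h ω * μ[f₁|m] ω ∂μ = ∫ ω, h ω * f₁ ω ∂μ := by
  calc ∫ ω, h ω * μ[f₁|m] ω ∂μ = ∫ ω, μ[h * f₁|m] ω ∂μ :=
        integral_congr_ae (condExp_mul_of_stronglyMeasurable_left hh hhf hf).symm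
    _ = ∫ ω, h ω * f₁ ω ∂μ := integral_condExp hm

theorem ae_condExp_nonneg_le (hf₁ : Integrable f₁ μ) (hf₂ : Integrable f₂ μ)
    (h0 : 0 ≤ᵐ[μ] f₁) (hle : f₁ ≤ᵐ[μ] f₂) :
    ∀ᵐ ω ∂μ, 0 ≤ μ[f₁|m] ω ∧ μ[f₁|m] ω ≤ μ[f₂|m] ω :=
  (condExp_nonneg h0).and (condExp_mono hf₁ hf₂ hle)

theorem condExp_div_condExp_mul_condExp_ae_eq (hf₁ : Integrable f₁ μ) (hf₂ : Integrable f₂ μ)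
    (h0 : 0 ≤ᵐ[μ] f₁) (hle : f₁ ≤ᵐ[μ] f₂) :
    ∀ᵐ ω ∂μ, μ[f₁|m] ω / μ[f₂|m] ω * μ[f₂|m] ω = μ[f₁|m] ω := by
  filter_upwards [ae_condExp_nonneg_le (m := m) hf₁ hf₂ h0 hle] with ω ⟨h0, hle⟩
  exact div_mul_cancel_of_imp fun h2 => le_antisymm (h2 ▸ hle) h0

theorem ae_abs_condExp_div_condExp_le_one (hf₁ : Integrable f₁ μ) (hf₂ : Integrable f₂ μ)
    (h0 : 0 ≤ᵐ[μ] f₁) (hle : f₁ ≤ᵐ[μ] f₂) :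
    ∀ᵐ ω ∂μ, |μ[f₁|m] ω / μ[f₂|m] ω| ≤ 1 := by
  filter_upwards [ae_condExp_nonneg_le (m := m) hf₁ hf₂ h0 hle] with ω ⟨h0, hle⟩
  rw [abs_le]
  exact ⟨by linarith [div_nonneg h0 (h0.trans hle)], div_le_one_of_le₀ hle (h0.trans hle)⟩

theorem stronglyMeasurable_condExp_div_condExp :
    StronglyMeasurable[m] (fun ω => μ[f₁|m] ω / μ[f₂|m] ω) :=
  (stronglyMeasurable_condExp.measurable.div
    stronglyMeasurable_condExp.measurable).stronglyMeasurable

theorem MeasureTheory.Integrable.mul_of_nonneg_of_le (hhf₂ : Integrable (h * f₂) μ)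
    (hh : AEStronglyMeasurable h μ) (hf₁ : AEStronglyMeasurable f₁ μ)
    (h0 : 0 ≤ᵐ[μ] f₁) (hle : f₁ ≤ᵐ[μ] f₂) : Integrable (h * f₁) μ := by
  refine hhf₂.mono (hh.mul hf₁) ?_
  filter_upwards [h0, hle] with ω h0 hle
  simp only [Pi.mul_apply, norm_mul]
  gcongr
  rwa [Real.norm_of_nonneg h0, Real.norm_of_nonneg (h0.trans hle)]

theorem integrable_mul_condExp_div_condExp_mul (hm : m ≤ m₀) (hf₁ : Integrable f₁ μ)
    (hf₂ : Integrable f₂ μ) (h0 : 0 ≤ᵐ[μ] f₁) (hle : f₁ ≤ᵐ[μ] f₂)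
    (hhf₂ : Integrable (h * f₂) μ) :
    Integrable (fun ω => h ω * (μ[f₁|m] ω / μ[f₂|m] ω) * f₂ ω) μ := by
  refine (hhf₂.bdd_mul (stronglyMeasurable_condExp_div_condExp.mono hm).aestronglyMeasurable
    (ae_abs_condExp_div_condExp_le_one hf₁ hf₂ h0 hle)).congr ?_
  filter_upwards with ω
  simp only [Pi.mul_apply]
  ring

theorem integrable_mul_sub_condExp_div_condExp_mul (hm : m ≤ m₀) (hf₁ : Integrable f₁ μ)
    (hf₂ : Integrable f₂ μ) (h0 : 0 ≤ᵐ[μ] f₁) (hle : f₁ ≤ᵐ[μ] f₂)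
    (hh : AEStronglyMeasurable h μ) (hhf₂ : Integrable (h * f₂) μ) :
    Integrable (fun ω => h ω * (f₁ ω - μ[f₁|m] ω / μ[f₂|m] ω * f₂ ω)) μ := by
  refine ((hhf₂.mul_of_nonneg_of_le hh hf₁.1 h0 hle).sub
    (integrable_mul_condExp_div_condExp_mul hm hf₁ hf₂ h0 hle hhf₂)).congr ?_
  filter_upwards with ω
  simp only [Pi.mul_apply, Pi.sub_apply]
  ring

theorem integral_mul_sub_condExp_div_condExp_mul_eq_zero (hm : m ≤ m₀)
    [SigmaFinite (μ.trim hm)] (hf₁ : Integrable f₁ μ) (hf₂ : Integrable f₂ μ)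
    (h0 : 0 ≤ᵐ[μ] f₁) (hle : f₁ ≤ᵐ[μ] f₂)
    (hh : StronglyMeasurable[m] h) (hhf₂ : Integrable (h * f₂) μ) :
    ∫ ω, h ω * (f₁ ω - μ[f₁|m] ω / μ[f₂|m] ω * f₂ ω) ∂μ = 0 := by
  set r : Ω → ℝ := fun ω => μ[f₁|m] ω / μ[f₂|m] ω with hr
  have hhf₁ := hhf₂.mul_of_nonneg_of_le (hh.mono hm).aestronglyMeasurable hf₁.1 h0 hle
  have hhrf₂ : Integrable ((h * r) * f₂) μ :=
    integrable_mul_condExp_div_condExp_mul hm hf₁ hf₂ h0 hle hhf₂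
  have hhr : StronglyMeasurable[m] (h * r) := hh.mul stronglyMeasurable_condExp_div_condExp
  calc ∫ ω, h ω * (f₁ ω - r ω * f₂ ω) ∂μ
        = ∫ ω, h ω * f₁ ω ∂μ - ∫ ω, (h * r) ω * f₂ ω ∂μ := by
        refine Eq.trans ?_ (integral_sub hhf₁ hhrf₂)
        congr 1 with ω
        simp only [Pi.mul_apply]
        ring
    _ = ∫ ω, h ω * μ[f₁|m] ω ∂μ - ∫ ω, (h * r) ω * μ[f₂|m] ω ∂μ := by
        rw [integral_mul_condExp_of_stronglyMeasurable_s15 hm hh hf₁ hhf₁,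
          integral_mul_condExp_of_stronglyMeasurable_s15 hm hhr hf₂ hhrf₂]
    _ = 0 := by
        rw [sub_eq_zero]
        refine integral_congr_ae ?_
        filter_upwards [condExp_div_condExp_mul_condExp_ae_eq (m := m) hf₁ hf₂ h0 hle] with ω hω
        simp only [Pi.mul_apply, hr, mul_assoc, hω]

end CondExpRatio

section BoundedBelow

variable {Ω : Type*} [MeasurableSpace Ω] {P : Measure Ω} {D V : Ω → ℝ} {c : ℝ}

theorem ae_abs_one_div_le_one_div (hc : 0 < c) (hV : ∀ᵐ ω ∂P, c ≤ V ω) :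
    ∀ᵐ ω ∂P, |1 / V ω| ≤ 1 / c := by
  filter_upwards [hV] with ω hω
  rw [abs_of_pos (one_div_pos.2 (hc.trans_le hω))]
  exact one_div_le_one_div_of_le hc hω

theorem integrable_one_div_of_ae_le [IsFiniteMeasure P] (hc : 0 < c) (hVm : Measurable V)
    (hV : ∀ᵐ ω ∂P, c ≤ V ω) : Integrable (fun ω => 1 / V ω) P :=
  (integrable_const (1 / c)).mono' (measurable_const.div hVm).aestronglyMeasurable
    (ae_abs_one_div_le_one_div hc hV)

theorem ae_div_nonneg_of_zero_or_one (hD : ∀ ω, D ω = 0 ∨ D ω = 1) (hc : 0 < c)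
    (hV : ∀ᵐ ω ∂P, c ≤ V ω) :
    0 ≤ᵐ[P] fun ω => D ω / V ω := by
  filter_upwards [hV] with ω hω
  exact div_nonneg (by rcases hD ω with h | h <;> simp [h]) (hc.le.trans hω)

theorem ae_div_le_one_div_of_zero_or_one (hD : ∀ ω, D ω = 0 ∨ D ω = 1) (hc : 0 < c)
    (hV : ∀ᵐ ω ∂P, c ≤ V ω) :
    (fun ω => D ω / V ω) ≤ᵐ[P] fun ω => 1 / V ω := by
  filter_upwards [hV] with ω hω
  exact div_le_div_of_nonneg_right (by rcases hD ω with h | h <;> simp [h]) (hc.le.trans hω)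

end BoundedBelow

theorem hetero_representer_reproduces_coefficient_general
    {Ω 𝒳 : Type*} [MeasurableSpace Ω] [MeasurableSpace 𝒳]
    (P : Measure Ω) [IsProbabilityMeasure P]
    (X : Ω → 𝒳) (hX : Measurable X)
    (D : Ω → ℝ) (hD : Measurable D) (hD01 : ∀ ω, D ω = 0 ∨ D ω = 1)
    (vfun : ℝ × 𝒳 → ℝ) (hvmeas : Measurable vfun)
    (V : Ω → ℝ) (hV : V = fun ω => vfun (D ω, X ω))
    (c₁ c₂ : ℝ) (hc₁ : 0 < c₁)
    (hVbound : ∀ᵐ ω ∂P, c₁ ≤ V ω ∧ V ω ≤ c₂)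
    (m : Ω → ℝ)
    (hm : m = fun ω =>
      (P[fun ω' => D ω' / V ω' | MeasurableSpace.comap X inferInstance]) ω /
      (P[fun ω' => 1 / V ω' | MeasurableSpace.comap X inferInstance]) ω)
    (κ : ℝ) (hκ : κ = ∫ ω, (D ω / V ω) * (1 - m ω) ∂P) (hκpos : 0 < κ)
    (Cbar : ℝ) (hCbar : Cbar = 1 / κ)
    (γsharp : Ω → ℝ) (hγsharp : γsharp = fun ω => Cbar * (D ω - m ω) / V ω) :
    ∀ (β : ℝ) (g : 𝒳 → ℝ), Measurable g → MemLp (fun ω => g (X ω)) 2 P →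
      (∫ ω, γsharp ω * (D ω * β + g (X ω)) ∂P) = β := by
  intro β g hg hgL2
  have hVm : Measurable V := hV ▸ hvmeas.comp (hD.prodMk hX)
  have hVc₁ : ∀ᵐ ω ∂P, c₁ ≤ V ω := hVbound.mono fun _ h => h.1
  have hf₂ := integrable_one_div_of_ae_le hc₁ hVm hVc₁
  have h0 := ae_div_nonneg_of_zero_or_one hD01 hc₁ hVc₁
  have hle := ae_div_le_one_div_of_zero_or_one hD01 hc₁ hVc₁
  have hf₁ : Integrable (fun ω => D ω / V ω) P :=
    hf₂.mono (hD.div hVm).aestronglyMeasurable <| by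
      filter_upwards [h0, hle] with ω h0 hle
      simpa only [Real.norm_of_nonneg h0, Real.norm_of_nonneg (h0.trans hle)]
  have hgX : StronglyMeasurable[MeasurableSpace.comap X inferInstance] (fun ω => g (X ω)) :=
    (hg.comp (comap_measurable X)).stronglyMeasurable
  have hgXf₂ : Integrable (fun ω => g (X ω) * (1 / V ω)) P :=
    (hgL2.integrable one_le_two).mul_bdd hf₂.1 (ae_abs_one_div_le_one_div hc₁ hVc₁)
  have hκint : Integrable (fun ω => D ω / V ω * (1 - m ω)) P :=
    .of_integral_ne_zero (hκ ▸ hκpos.ne')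
  have hsplit : ∀ ω, γsharp ω * (D ω * β + g (X ω)) = Cbar * (β * (D ω / V ω * (1 - m ω)) +
      g (X ω) * (D ω / V ω - m ω * (1 / V ω))) := by
    intro ω
    rcases hD01 ω with h | h <;> simp only [hγsharp, h] <;> ring
  rw [integral_congr_ae (.of_forall hsplit), integral_const_mul, integral_add (hκint.const_mul β)
    (hm ▸ integrable_mul_sub_condExp_div_condExp_mul hX.comap_le hf₁ hf₂ h0 hle
      (hgX.mono hX.comap_le).aestronglyMeasurable hgXf₂),
    integral_const_mul, ← hκ, hm,
    integral_mul_sub_condExp_div_condExp_mul_eq_zero hX.comap_le hf₁ hf₂ h0 hle hgX hgXf₂,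
    add_zero, hCbar]
  field_simp

/-- Section 3.4, Example 2: the heteroskedasticity-adjusted representer
reproduces the partially linear coefficient. With `m(X) = E[D/v|X]/E[1/v|X]`,
`κ = E[(D/v)(1 − m(X))] > 0`, `C̄ = 1/κ` and `γ# = C̄·(D − m(X))/v`, one has
`E[γ#·(D·β + g(X))] = β` for every `β ∈ ℝ` and square-integrable `g`. -/
theorem hetero_representer_reproduces_coefficient
    {Ω 𝒳 : Type*} [MeasurableSpace Ω] [MeasurableSpace 𝒳]
    (P : Measure Ω) [IsProbabilityMeasure P]
    (X : Ω → 𝒳) (hX : Measurable X)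
    (D : Ω → ℝ) (hD : Measurable D) (hD01 : ∀ ω, D ω = 0 ∨ D ω = 1)
    (vfun : ℝ × 𝒳 → ℝ) (hvmeas : Measurable vfun)
    (V : Ω → ℝ) (hV : V = fun ω => vfun (D ω, X ω))
    (c₁ c₂ : ℝ) (hc₁ : 0 < c₁) (hc₁₂ : c₁ ≤ c₂)
    (hVbound : ∀ᵐ ω ∂P, c₁ ≤ V ω ∧ V ω ≤ c₂)
    (m : Ω → ℝ)
    (hm : m = fun ω =>
      (P[fun ω' => D ω' / V ω' | MeasurableSpace.comap X inferInstance]) ω /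
      (P[fun ω' => 1 / V ω' | MeasurableSpace.comap X inferInstance]) ω)
    (κ : ℝ) (hκ : κ = ∫ ω, (D ω / V ω) * (1 - m ω) ∂P) (hκpos : 0 < κ)
    (Cbar : ℝ) (hCbar : Cbar = 1 / κ)
    (γsharp : Ω → ℝ) (hγsharp : γsharp = fun ω => Cbar * (D ω - m ω) / V ω) :
    ∀ (β : ℝ) (g : 𝒳 → ℝ), Measurable g → MemLp (fun ω => g (X ω)) 2 P →
      (∫ ω, γsharp ω * (D ω * β + g (X ω)) ∂P) = β :=
  hetero_representer_reproduces_coefficient_general P X hX D hD hD01 vfun hvmeas V hV c₁ c₂ hc₁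
    hVbound m hm κ hκ hκpos Cbar hCbar γsharp hγsharp
end

section
/- (Appendix D: the delta-method variance of the ATT estimator equals the semiparametric efficiency bound.) Let X be a random element of a measurable space 𝒳 on a probability space (Ω, P), and let e: 𝒳 → ℝ be measurable with ε₀ ≤ e(X) ≤ 1 − ε₀ almost surely for some ε₀ ∈ (0, 1/2). Let β: 𝒳 → ℝ with E[β(X)²] < ∞ and let s₁, s₀: 𝒳 → [0, ∞) be measurable with E[s₁(X)] < ∞ and E[s₀(X)] < ∞. Set p := E[e(X)] (so p ∈ (0, 1)), ψ := E[β(X)·e(X)], τ := ψ/p, σ_ψ² := E[ e(X)·s₁(X) + e(X)²·s₀(X)/(1 − e(X)) + β(X)²·e(X) ] − ψ², σ_p² := p·(1 − p), σ_{ψp} := E[β(X)·e(X)·(1 − p)], and V := σ_ψ²/p² + ψ²·σ_p²/p⁴ − 2·ψ·σ_{ψp}/p³. Then V = E[ e(X)·s₁(X)/p² + e(X)²·s₀(X)/(p²·(1 − e(X))) + e(X)·(β(X) − τ)²/p² ]. -/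
/-!
Both sides reduce to `I / p² - ψ² / p³` with `I = E[e s₁ + e² s₀ / (1 - e) + β² e]`: expanding
`(β - τ)²` and integrating gives `(I - 2τψ + τ²p) / p²` on the right, and with `τ = ψ / p` this
is the delta-method expression. Overlap `ε₀ ≤ e ≤ 1 - ε₀` makes every term integrable, the
`1 / (1 - e)` weight being bounded by `1 / ε₀`.
-/

open MeasureTheory

lemma sq_div_one_sub_le {x ε₀ : ℝ} (hε₀ : 0 < ε₀) (hx₀ : 0 ≤ x) (hx : x ≤ 1 - ε₀) :
    |x ^ 2 / (1 - x)| ≤ 1 / ε₀ := by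
  have hx₁ : x ≤ 1 := by linarith
  rw [abs_of_nonneg (div_nonneg (sq_nonneg x) (by linarith))]
  exact div_le_div₀ zero_le_one (pow_le_one₀ hx₀ hx₁) hε₀ (by linarith)

section Integrability

variable {Ω : Type*} [MeasurableSpace Ω] {P : Measure Ω} {E : Ω → ℝ}

lemma ae_norm_le_one_of_overlap {ε₀ : ℝ} (hε₀ : 0 < ε₀)
    (hE : ∀ᵐ ω ∂P, ε₀ ≤ E ω ∧ E ω ≤ 1 - ε₀) : ∀ᵐ ω ∂P, ‖E ω‖ ≤ 1 := by
  filter_upwards [hE] with ω hω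
  exact abs_le.2 ⟨by linarith [hω.1], by linarith [hω.2]⟩

lemma MeasureTheory.Integrable.sq_mul_div_one_sub_of_overlap {S : Ω → ℝ} {ε₀ : ℝ}
    (hS : Integrable S P) (hε₀ : 0 < ε₀) (hEm : AEStronglyMeasurable E P)
    (hE : ∀ᵐ ω ∂P, ε₀ ≤ E ω ∧ E ω ≤ 1 - ε₀) :
    Integrable (fun ω => E ω ^ 2 * S ω / (1 - E ω)) P := by
  have hbound : ∀ᵐ ω ∂P, ‖E ω ^ 2 / (1 - E ω)‖ ≤ 1 / ε₀ := by
    filter_upwards [hE] with ω hω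
    exact sq_div_one_sub_le hε₀ (hε₀.le.trans hω.1) hω.2
  have hm : AEStronglyMeasurable (fun ω => E ω ^ 2 / (1 - E ω)) P :=
    ((hEm.aemeasurable.pow_const 2).div
      (aemeasurable_const.sub hEm.aemeasurable)).aestronglyMeasurable
  simpa only [div_mul_eq_mul_div] using hS.bdd_mul hm hbound

end Integrability

lemma att_integrand_eq (p τ e s₁ s₀ b : ℝ) :
    e * s₁ / p ^ 2 + e ^ 2 * s₀ / (p ^ 2 * (1 - e)) + e * (b - τ) ^ 2 / p ^ 2 =
      ((e * s₁ + e ^ 2 * s₀ / (1 - e) + b ^ 2 * e) - 2 * τ * (b * e) + τ ^ 2 * e) / p ^ 2 := by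
  rw [mul_comm (p ^ 2), ← div_div]
  ring

lemma integral_att_integrand {Ω : Type*} [MeasurableSpace Ω] {P : Measure Ω}
    {E S₁ S₀ B : Ω → ℝ} (p τ : ℝ)
    (hI : Integrable (fun ω => E ω * S₁ ω + E ω ^ 2 * S₀ ω / (1 - E ω) + B ω ^ 2 * E ω) P)
    (hBE : Integrable (fun ω => B ω * E ω) P) (hE : Integrable E P) :
    ∫ ω, (E ω * S₁ ω / p ^ 2 + E ω ^ 2 * S₀ ω / (p ^ 2 * (1 - E ω)) +
      E ω * (B ω - τ) ^ 2 / p ^ 2) ∂P =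
    ((∫ ω, (E ω * S₁ ω + E ω ^ 2 * S₀ ω / (1 - E ω) + B ω ^ 2 * E ω) ∂P) -
      2 * τ * ∫ ω, B ω * E ω ∂P + τ ^ 2 * ∫ ω, E ω ∂P) / p ^ 2 := by
  simp_rw [att_integrand_eq]
  rw [integral_div, integral_add _ (hE.const_mul _), integral_sub hI (hBE.const_mul _),
    integral_const_mul, integral_const_mul]
  exact hI.sub (hBE.const_mul _)

lemma delta_variance_eq (p ψ I : ℝ) (hp : p ≠ 0) :
    (I - ψ ^ 2) / p ^ 2 + ψ ^ 2 * (p * (1 - p)) / p ^ 4 - 2 * ψ * (ψ * (1 - p)) / p ^ 3 =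
      (I - 2 * (ψ / p) * ψ + (ψ / p) ^ 2 * p) / p ^ 2 := by
  field_simp
  ring

theorem att_delta_method_variance_equals_bound_general
    {Ω 𝒳 : Type*} [MeasurableSpace Ω] [MeasurableSpace 𝒳]
    (P : Measure Ω) [IsProbabilityMeasure P]
    (X : Ω → 𝒳) (hX : Measurable X)
    (e : 𝒳 → ℝ) (hemeas : Measurable e)
    (ε₀ : ℝ) (hε₀ : ε₀ ∈ Set.Ioo (0 : ℝ) (1 / 2))
    (hebound : ∀ᵐ ω ∂P, ε₀ ≤ e (X ω) ∧ e (X ω) ≤ 1 - ε₀)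
    (β : 𝒳 → ℝ) (hβL2 : MemLp (fun ω => β (X ω)) 2 P)
    (s₁ s₀ : 𝒳 → ℝ)
    (hs₁int : Integrable (fun ω => s₁ (X ω)) P)
    (hs₀int : Integrable (fun ω => s₀ (X ω)) P)
    (p ψ τ σψ2 σp2 σψp V : ℝ)
    (hp : p = ∫ ω, e (X ω) ∂P)
    (hψ : ψ = ∫ ω, β (X ω) * e (X ω) ∂P)
    (hτ : τ = ψ / p)
    (hσψ2 : σψ2 = (∫ ω, (e (X ω) * s₁ (X ω) + e (X ω) ^ 2 * s₀ (X ω) / (1 - e (X ω)) +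
      β (X ω) ^ 2 * e (X ω)) ∂P) - ψ ^ 2)
    (hσp2 : σp2 = p * (1 - p))
    (hσψp : σψp = ∫ ω, β (X ω) * e (X ω) * (1 - p) ∂P)
    (hV : V = σψ2 / p ^ 2 + ψ ^ 2 * σp2 / p ^ 4 - 2 * ψ * σψp / p ^ 3) :
    V = ∫ ω, (e (X ω) * s₁ (X ω) / p ^ 2 +
      e (X ω) ^ 2 * s₀ (X ω) / (p ^ 2 * (1 - e (X ω))) +
      e (X ω) * (β (X ω) - τ) ^ 2 / p ^ 2) ∂P := by
  have heX : AEStronglyMeasurable (fun ω => e (X ω)) P := (hemeas.comp hX).aestronglyMeasurable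
  have he_le : ∀ᵐ ω ∂P, ‖e (X ω)‖ ≤ 1 := ae_norm_le_one_of_overlap hε₀.1 hebound
  have he_int : Integrable (fun ω => e (X ω)) P := .of_bound heX 1 he_le
  have hβe_int : Integrable (fun ω => β (X ω) * e (X ω)) P :=
    (hβL2.integrable one_le_two).mul_bdd heX he_le
  have hI : Integrable (fun ω => e (X ω) * s₁ (X ω) + e (X ω) ^ 2 * s₀ (X ω) / (1 - e (X ω)) +
      β (X ω) ^ 2 * e (X ω)) P :=
    ((hs₁int.bdd_mul heX he_le).add (hs₀int.sq_mul_div_one_sub_of_overlap hε₀.1 heX hebound)).add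
      (hβL2.integrable_sq.mul_bdd heX he_le)
  have hp_pos : 0 < p := hp ▸ hε₀.1.trans_le (by
    simpa using integral_mono_ae (integrable_const ε₀) he_int (hebound.mono fun _ h => h.1))
  subst hV hσψ2 hσp2 hτ
  rw [hσψp, integral_mul_const, ← hψ, integral_att_integrand p _ hI hβe_int he_int, ← hp, ← hψ]
  exact delta_variance_eq p ψ _ hp_pos.ne'

/-- Appendix D: the delta-method variance of the ATT estimator equals the
semiparametric efficiency bound:
`V = σ_ψ²/p² + ψ²σ_p²/p⁴ − 2ψσ_{ψp}/p³
   = E[e(X)s₁(X)/p² + e(X)²s₀(X)/(p²(1−e(X))) + e(X)(β(X) − τ)²/p²]`. -/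
theorem att_delta_method_variance_equals_bound
    {Ω 𝒳 : Type*} [MeasurableSpace Ω] [MeasurableSpace 𝒳]
    (P : Measure Ω) [IsProbabilityMeasure P]
    (X : Ω → 𝒳) (hX : Measurable X)
    (e : 𝒳 → ℝ) (hemeas : Measurable e)
    (ε₀ : ℝ) (hε₀ : ε₀ ∈ Set.Ioo (0 : ℝ) (1 / 2))
    (hebound : ∀ᵐ ω ∂P, ε₀ ≤ e (X ω) ∧ e (X ω) ≤ 1 - ε₀)
    (β : 𝒳 → ℝ) (hβmeas : Measurable β) (hβL2 : MemLp (fun ω => β (X ω)) 2 P)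
    (s₁ s₀ : 𝒳 → ℝ) (hs₁meas : Measurable s₁) (hs₀meas : Measurable s₀)
    (hs₁nonneg : ∀ x, 0 ≤ s₁ x) (hs₀nonneg : ∀ x, 0 ≤ s₀ x)
    (hs₁int : Integrable (fun ω => s₁ (X ω)) P)
    (hs₀int : Integrable (fun ω => s₀ (X ω)) P)
    (p ψ τ σψ2 σp2 σψp V : ℝ)
    (hp : p = ∫ ω, e (X ω) ∂P)
    (hψ : ψ = ∫ ω, β (X ω) * e (X ω) ∂P)
    (hτ : τ = ψ / p)
    (hσψ2 : σψ2 = (∫ ω, (e (X ω) * s₁ (X ω) + e (X ω) ^ 2 * s₀ (X ω) / (1 - e (X ω)) +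
      β (X ω) ^ 2 * e (X ω)) ∂P) - ψ ^ 2)
    (hσp2 : σp2 = p * (1 - p))
    (hσψp : σψp = ∫ ω, β (X ω) * e (X ω) * (1 - p) ∂P)
    (hV : V = σψ2 / p ^ 2 + ψ ^ 2 * σp2 / p ^ 4 - 2 * ψ * σψp / p ^ 3) :
    V = ∫ ω, (e (X ω) * s₁ (X ω) / p ^ 2 +
      e (X ω) ^ 2 * s₀ (X ω) / (p ^ 2 * (1 - e (X ω))) +
      e (X ω) * (β (X ω) - τ) ^ 2 / p ^ 2) ∂P :=
  att_delta_method_variance_equals_bound_general P X hX e hemeas ε₀ hε₀ hebound β hβL2 s₁ s₀ hs₁int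
    hs₀int p ψ τ σψ2 σp2 σψp V hp hψ hτ hσψ2 hσp2 hσψp hV
end
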